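/- arXiv:1801.07953 — 9 statements merged into one kernel-verified Lean document; each statement's English description precedes it below -/
import Mathlib

section
/- Let H be a complex Hilbert space, n ∈ ℕ, and A₁,…,Aₙ, B₁,…,Bₙ, X ∈ B(H). Then ‖Σ_{j=1}^n Aⱼ* X Bⱼ‖ ≤ ‖Σ_{j=1}^n Aⱼ* Aⱼ‖^{1/2} · ‖Σ_{j=1}^n Bⱼ* Bⱼ‖^{1/2} · ‖X‖. -/
open ContinuousLinearMap

open scoped InnerProductSpace

private lemma aux_sum_sq_le
    {H : Type*} [NormedAddCommGroup H] [InnerProductSpace ℂ H] [CompleteSpace H]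
    {n : ℕ} (C : Fin n → H →L[ℂ] H) (x : H) :
    ∑ j, ‖C j x‖ ^ 2 ≤ ‖∑ j, adjoint (C j) * C j‖ * ‖x‖ ^ 2 := by
  have h1 : (∑ j, ‖C j x‖ ^ 2 : ℝ) = RCLike.re (⟪(∑ j, adjoint (C j) * C j) x, x⟫_ℂ) := by
    rw [ContinuousLinearMap.sum_apply, sum_inner, map_sum]
    refine Finset.sum_congr rfl fun j _ => ?_
    rw [ContinuousLinearMap.mul_apply, adjoint_inner_left, inner_self_eq_norm_sq]
  rw [h1]
  calc RCLike.re (⟪(∑ j, adjoint (C j) * C j) x, x⟫_ℂ)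
      ≤ ‖(⟪(∑ j, adjoint (C j) * C j) x, x⟫_ℂ)‖ := RCLike.re_le_norm _
    _ ≤ ‖(∑ j, adjoint (C j) * C j) x‖ * ‖x‖ := norm_inner_le_norm _ _
    _ ≤ ‖∑ j, adjoint (C j) * C j‖ * ‖x‖ * ‖x‖ := by
        gcongr; exact le_opNorm _ _
    _ = ‖∑ j, adjoint (C j) * C j‖ * ‖x‖ ^ 2 := by ring

/-- Cauchy–Schwarz type inequality for elementary operators:
`‖Σ Aⱼ* X Bⱼ‖ ≤ ‖Σ Aⱼ* Aⱼ‖^{1/2} ‖Σ Bⱼ* Bⱼ‖^{1/2} ‖X‖`. -/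
theorem norm_sum_adjoint_mul_le
    {H : Type*} [NormedAddCommGroup H] [InnerProductSpace ℂ H] [CompleteSpace H]
    (n : ℕ) (A B : Fin n → H →L[ℂ] H) (X : H →L[ℂ] H) :
    ‖∑ j, adjoint (A j) * X * B j‖ ≤
      Real.sqrt ‖∑ j, adjoint (A j) * A j‖ * Real.sqrt ‖∑ j, adjoint (B j) * B j‖ * ‖X‖ := by
  set T := ∑ j, adjoint (A j) * X * B j with hT
  set a := Real.sqrt ‖∑ j, adjoint (A j) * A j‖ with ha
  set b := Real.sqrt ‖∑ j, adjoint (B j) * B j‖ with hb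
  have ha0 : 0 ≤ a := Real.sqrt_nonneg _
  have hb0 : 0 ≤ b := Real.sqrt_nonneg _
  refine opNorm_le_bound _ (by positivity) fun x => ?_
  -- key: ‖T x‖ ^ 2 ≤ a * b * ‖X‖ * ‖x‖ * ‖T x‖
  have key : ‖T x‖ ^ 2 ≤ a * b * ‖X‖ * ‖x‖ * ‖T x‖ := by
    have h1 : (‖T x‖ ^ 2 : ℝ) = RCLike.re (⟪T x, T x⟫_ℂ) :=
      (inner_self_eq_norm_sq (𝕜 := ℂ) _).symm
    have h2 : (⟪T x, T x⟫_ℂ) = ∑ j, ⟪X (B j x), A j (T x)⟫_ℂ := by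
      rw [hT, ContinuousLinearMap.sum_apply, sum_inner]
      refine Finset.sum_congr rfl fun j _ => ?_
      rw [ContinuousLinearMap.mul_apply, ContinuousLinearMap.mul_apply, adjoint_inner_left]
    calc ‖T x‖ ^ 2 = RCLike.re (⟪T x, T x⟫_ℂ) := h1
      _ ≤ ‖(⟪T x, T x⟫_ℂ)‖ := RCLike.re_le_norm _
      _ = ‖∑ j, ⟪X (B j x), A j (T x)⟫_ℂ‖ := by rw [h2]
      _ ≤ ∑ j, ‖(⟪X (B j x), A j (T x)⟫_ℂ)‖ := norm_sum_le _ _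
      _ ≤ ∑ j, ‖X‖ * (‖B j x‖ * ‖A j (T x)‖) := by
          refine Finset.sum_le_sum fun j _ => ?_
          calc ‖(⟪X (B j x), A j (T x)⟫_ℂ)‖ ≤ ‖X (B j x)‖ * ‖A j (T x)‖ :=
                norm_inner_le_norm _ _
            _ ≤ ‖X‖ * ‖B j x‖ * ‖A j (T x)‖ := by gcongr; exact le_opNorm _ _
            _ = ‖X‖ * (‖B j x‖ * ‖A j (T x)‖) := by ring
      _ = ‖X‖ * ∑ j, ‖B j x‖ * ‖A j (T x)‖ := by rw [Finset.mul_sum]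
      _ ≤ ‖X‖ * (Real.sqrt (∑ j, ‖B j x‖ ^ 2) * Real.sqrt (∑ j, ‖A j (T x)‖ ^ 2)) := by
          gcongr
          exact Real.sum_mul_le_sqrt_mul_sqrt _ _ _
      _ ≤ ‖X‖ * ((b * ‖x‖) * (a * ‖T x‖)) := by
          gcongr ‖X‖ * (?_ * ?_)
          · exact (Real.sqrt_le_sqrt (aux_sum_sq_le B x)).trans
              (by rw [Real.sqrt_mul (norm_nonneg _), Real.sqrt_sq (norm_nonneg _)])
          · exact (Real.sqrt_le_sqrt (aux_sum_sq_le A (T x))).trans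
              (by rw [Real.sqrt_mul (norm_nonneg _), Real.sqrt_sq (norm_nonneg _)])
      _ = a * b * ‖X‖ * ‖x‖ * ‖T x‖ := by ring
  clear_value T a b
  rcases eq_or_lt_of_le (norm_nonneg (T x)) with h0 | h0
  · rw [← h0]; positivity
  · refine le_of_mul_le_mul_right ?_ h0
    rw [← sq]
    exact key
end

section
/- Let H be a complex Hilbert space, (Ω, μ) a measure space, and A, B : Ω → B(H) strongly measurable functions such that t ↦ A(t)* A(t) and t ↦ B(t)* B(t) are Bochner integrable. Let X ∈ B(H) and assume t ↦ A(t)* X B(t) is Bochner integrable. Then ‖∫_Ω A(t)* X B(t) dμ(t)‖ ≤ ‖∫_Ω A(t)* A(t) dμ(t)‖^{1/2} · ‖∫_Ω B(t)* B(t) dμ(t)‖^{1/2} · ‖X‖. -/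
/-!
For unit vectors `x, y`, `⟪x, (∫ A* X B) y⟫ = ∫ ⟪A x, X (B y)⟫`, whose modulus is at most
`‖X‖ ∫ ‖A x‖ ‖B y‖`. By Cauchy–Schwarz in `L²(μ)` this is at most `‖X‖` times the square roots of
`∫ ‖A x‖² = re ⟪x, (∫ A* A) x⟫ ≤ ‖∫ A* A‖` and of the analogous bound for `B`.
-/

open ContinuousLinearMap MeasureTheory RCLike
open scoped InnerProductSpace

theorem integral_mul_le_sqrt_integral_sq_mul_sqrt_integral_sq {α : Type*} [MeasurableSpace α]
    {μ : Measure α} {f g : α → ℝ} (hf₀ : 0 ≤ᵐ[μ] f) (hg₀ : 0 ≤ᵐ[μ] g)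
    (hf : MemLp f 2 μ) (hg : MemLp g 2 μ) :
    ∫ a, f a * g a ∂μ ≤ √(∫ a, f a ^ 2 ∂μ) * √(∫ a, g a ^ 2 ∂μ) := by
  have h := integral_mul_le_Lp_mul_Lq_of_nonneg .two_two hf₀ hg₀ (by simpa using hf)
    (by simpa using hg)
  simpa [Real.sqrt_eq_rpow] using h

section

variable {E F : Type*} [NormedAddCommGroup E] [InnerProductSpace ℂ E]
  [CompleteSpace E] [NormedAddCommGroup F] [InnerProductSpace ℂ F] [CompleteSpace F]
  {Ω : Type*} [MeasurableSpace Ω] {μ : Measure Ω} {A : Ω → E →L[ℂ] F}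

theorem integral_norm_apply_sq_eq (hAA : Integrable (fun t => adjoint (A t) ∘L A t) μ) (x : E) :
    ∫ t, ‖A t x‖ ^ 2 ∂μ = re ⟪x, (∫ t, adjoint (A t) ∘L A t ∂μ) x⟫_ℂ := by
  have hint : Integrable (fun t => ⟪x, (adjoint (A t) ∘L A t) x⟫_ℂ) μ :=
    (hAA.apply_continuousLinearMap x).const_inner x
  simp only [apply_norm_sq_eq_inner_adjoint_right]
  rw [integral_re hint, integral_inner (hAA.apply_continuousLinearMap x), integral_apply hAA]

theorem integrable_norm_apply_sq (hAA : Integrable (fun t => adjoint (A t) ∘L A t) μ) (x : E) :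
    Integrable (fun t => ‖A t x‖ ^ 2) μ := by
  simpa only [apply_norm_sq_eq_inner_adjoint_right] using
    ((hAA.apply_continuousLinearMap x).const_inner x).re

theorem integral_norm_apply_sq_le (hAA : Integrable (fun t => adjoint (A t) ∘L A t) μ) (x : E) :
    ∫ t, ‖A t x‖ ^ 2 ∂μ ≤ ‖∫ t, adjoint (A t) ∘L A t ∂μ‖ * ‖x‖ ^ 2 := by
  rw [integral_norm_apply_sq_eq hAA]
  exact (re_inner_le_norm _ _).trans <|
    (mul_le_mul_of_nonneg_left (le_opNorm _ _) (norm_nonneg _)).trans_eq (by ring)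

theorem memLp_norm_apply_two (hA : AEStronglyMeasurable A μ)
    (hAA : Integrable (fun t => adjoint (A t) ∘L A t) μ) (x : E) :
    MemLp (fun t => ‖A t x‖) 2 μ :=
  (memLp_two_iff_integrable_sq (hA.apply_continuousLinearMap x).norm).2
    (integrable_norm_apply_sq hAA x)

variable {G K : Type*} [NormedAddCommGroup G] [InnerProductSpace ℂ G] [NormedAddCommGroup K]
  [InnerProductSpace ℂ K] {B : Ω → G →L[ℂ] K}

theorem inner_integral_adjoint_comp_comp_apply {X : K →L[ℂ] F}
    (hAXB : Integrable (fun t => (adjoint (A t) ∘L X) ∘L B t) μ) (x : E) (y : G) :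
    ⟪x, (∫ t, (adjoint (A t) ∘L X) ∘L B t ∂μ) y⟫_ℂ = ∫ t, ⟪A t x, X (B t y)⟫_ℂ ∂μ := by
  rw [integral_apply hAXB, ← integral_inner (hAXB.apply_continuousLinearMap y)]
  simp only [comp_apply, adjoint_inner_right]

variable [CompleteSpace G] [CompleteSpace K]

theorem integral_norm_apply_mul_norm_apply_le (hA : AEStronglyMeasurable A μ)
    (hB : AEStronglyMeasurable B μ) (hAA : Integrable (fun t => adjoint (A t) ∘L A t) μ)
    (hBB : Integrable (fun t => adjoint (B t) ∘L B t) μ) (x : E) (y : G) :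
    ∫ t, ‖A t x‖ * ‖B t y‖ ∂μ ≤
      √‖∫ t, adjoint (A t) ∘L A t ∂μ‖ * √‖∫ t, adjoint (B t) ∘L B t ∂μ‖ * (‖x‖ * ‖y‖) := by
  calc ∫ t, ‖A t x‖ * ‖B t y‖ ∂μ ≤ √(∫ t, ‖A t x‖ ^ 2 ∂μ) * √(∫ t, ‖B t y‖ ^ 2 ∂μ) :=
        integral_mul_le_sqrt_integral_sq_mul_sqrt_integral_sq (.of_forall fun _ => norm_nonneg _)
          (.of_forall fun _ => norm_nonneg _) (memLp_norm_apply_two hA hAA x)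
          (memLp_norm_apply_two hB hBB y)
    _ ≤ √(‖∫ t, adjoint (A t) ∘L A t ∂μ‖ * ‖x‖ ^ 2) *
          √(‖∫ t, adjoint (B t) ∘L B t ∂μ‖ * ‖y‖ ^ 2) := by
        gcongr
        exacts [integral_norm_apply_sq_le hAA x, integral_norm_apply_sq_le hBB y]
    _ = _ := by
        rw [Real.sqrt_mul (norm_nonneg _), Real.sqrt_mul (norm_nonneg _),
          Real.sqrt_sq (norm_nonneg _), Real.sqrt_sq (norm_nonneg _)]
        ring

theorem norm_integral_adjoint_comp_comp_le (hA : AEStronglyMeasurable A μ)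
    (hB : AEStronglyMeasurable B μ) (hAA : Integrable (fun t => adjoint (A t) ∘L A t) μ)
    (hBB : Integrable (fun t => adjoint (B t) ∘L B t) μ) (X : K →L[ℂ] F)
    (hAXB : Integrable (fun t => (adjoint (A t) ∘L X) ∘L B t) μ) :
    ‖∫ t, (adjoint (A t) ∘L X) ∘L B t ∂μ‖ ≤
      √‖∫ t, adjoint (A t) ∘L A t ∂μ‖ * √‖∫ t, adjoint (B t) ∘L B t ∂μ‖ * ‖X‖ := by
  have hpointwise (x : E) (y : G) (t : Ω) :
      ‖⟪A t x, X (B t y)⟫_ℂ‖ ≤ ‖X‖ * (‖A t x‖ * ‖B t y‖) :=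
    (norm_inner_le_norm _ _).trans <|
      (mul_le_mul_of_nonneg_left (le_opNorm _ _) (norm_nonneg _)).trans_eq (by ring)
  refine opNorm_le_of_re_inner_le (by positivity) fun y x hy hx => ?_
  calc re ⟪(∫ t, (adjoint (A t) ∘L X) ∘L B t ∂μ) y, x⟫_ℂ
      ≤ ‖∫ t, ⟪A t x, X (B t y)⟫_ℂ ∂μ‖ := by
        rw [← inner_integral_adjoint_comp_comp_apply hAXB, ← norm_inner_symm]
        exact re_le_norm _
    _ ≤ ∫ t, ‖X‖ * (‖A t x‖ * ‖B t y‖) ∂μ :=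
        norm_integral_le_of_norm_le
          (((memLp_norm_apply_two hA hAA x).integrable_mul
            (memLp_norm_apply_two hB hBB y)).const_mul _)
          (.of_forall (hpointwise x y))
    _ ≤ ‖X‖ * (√‖∫ t, adjoint (A t) ∘L A t ∂μ‖ * √‖∫ t, adjoint (B t) ∘L B t ∂μ‖ *
          (‖x‖ * ‖y‖)) := by
        rw [integral_const_mul]
        gcongr
        exact integral_norm_apply_mul_norm_apply_le hA hB hAA hBB x y
    _ = _ := by rw [hx, hy]; ring

end

/-- Cauchy–Schwarz type inequality for inner product type integral transformers:
`‖∫ A(t)* X B(t) dμ‖ ≤ ‖∫ A(t)* A(t) dμ‖^{1/2} ‖∫ B(t)* B(t) dμ‖^{1/2} ‖X‖`. -/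
theorem norm_integral_adjoint_mul_le
    {H : Type*} [NormedAddCommGroup H] [InnerProductSpace ℂ H] [CompleteSpace H]
    {Ω : Type*} [MeasurableSpace Ω] (μ : Measure Ω)
    (A B : Ω → H →L[ℂ] H)
    (hA : StronglyMeasurable A) (hB : StronglyMeasurable B)
    (hAA : Integrable (fun t => adjoint (A t) * A t) μ)
    (hBB : Integrable (fun t => adjoint (B t) * B t) μ)
    (X : H →L[ℂ] H)
    (hAXB : Integrable (fun t => adjoint (A t) * X * B t) μ) :
    ‖∫ t, adjoint (A t) * X * B t ∂μ‖ ≤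
      Real.sqrt ‖∫ t, adjoint (A t) * A t ∂μ‖ *
        Real.sqrt ‖∫ t, adjoint (B t) * B t ∂μ‖ * ‖X‖ :=
  norm_integral_adjoint_comp_comp_le hA.aestronglyMeasurable hB.aestronglyMeasurable hAA hBB X hAXB
end

section
/- Let n, m ∈ ℕ and let A₁,…,Aₘ, B₁,…,Bₘ, X be n×n complex matrices. Then ‖Σ_{j=1}^m Aⱼᴴ X Bⱼ‖_F ≤ ‖Σ_{j=1}^m Aⱼᴴ Aⱼ‖_op^{1/2} · ‖X · (Σ_{j=1}^m Bⱼ Bⱼᴴ)^{1/2}‖_F. -/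
/-!
Write `Y` for the left-hand side, `C = Σ Aⱼᴴ Aⱼ` and `S = Σ Bⱼ Bⱼᴴ`. Expanding one factor of
`‖Y‖_F² = Re tr (Yᴴ Y)` gives `Σⱼ Re tr ((Aⱼ Y)ᴴ (X Bⱼ))`, and Cauchy–Schwarz, first for the
Frobenius inner product and then over `j`, bounds this by `(Σ ‖Aⱼ Y‖_F²)^{1/2} (Σ ‖X Bⱼ‖_F²)^{1/2}`.
The first sum is `Re tr (Yᴴ C Y) ≤ ‖C‖_op ‖Y‖_F²`; the second is `tr (X S Xᴴ) = ‖X R‖_F²` for any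
`R` with `R Rᴴ = S`, such as `R = S^{1/2}`. Dividing by `‖Y‖_F` gives the claim.
-/

open Matrix
open scoped ComplexOrder

/-- The Frobenius (Hilbert–Schmidt) norm of a complex matrix. -/
noncomputable def frobeniusNorm {n : ℕ} (M : Matrix (Fin n) (Fin n) ℂ) : ℝ :=
  Real.sqrt (∑ i, ∑ j, ‖M i j‖ ^ 2)

/-- The ℓ²→ℓ² operator norm of a complex matrix. -/
noncomputable def l2OpNorm {n : ℕ} (M : Matrix (Fin n) (Fin n) ℂ) : ℝ :=
  ‖(Matrix.toEuclideanCLM (𝕜 := ℂ) M : EuclideanSpace ℂ (Fin n) →L[ℂ] EuclideanSpace ℂ (Fin n))‖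

/-- A sum of matrices of the form `B Bᴴ` is positive semidefinite. -/
lemma posSemidef_sum_mul_conjTranspose {n m : ℕ} (B : Fin m → Matrix (Fin n) (Fin n) ℂ) :
    (∑ j, B j * (B j)ᴴ).PosSemidef := by
  apply Finset.sum_induction
  · exact fun a b ha hb => ha.add hb
  · exact Matrix.PosSemidef.zero
  · exact fun i _ => Matrix.posSemidef_self_mul_conjTranspose (B i)

section Frobenius

variable {n : ℕ}

lemma frobeniusNorm_nonneg (M : Matrix (Fin n) (Fin n) ℂ) : 0 ≤ frobeniusNorm M :=
  Real.sqrt_nonneg _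

lemma l2OpNorm_nonneg (M : Matrix (Fin n) (Fin n) ℂ) : 0 ≤ l2OpNorm M :=
  norm_nonneg _

lemma frobeniusNorm_eq_norm_vec (M : Matrix (Fin n) (Fin n) ℂ) :
    frobeniusNorm M = ‖(WithLp.toLp 2 M.vec : EuclideanSpace ℂ (Fin n × Fin n))‖ := by
  rw [frobeniusNorm, EuclideanSpace.norm_eq, Fintype.sum_prod_type, Finset.sum_comm]
  rfl

lemma trace_conjTranspose_mul_eq_inner_vec (P Q : Matrix (Fin n) (Fin n) ℂ) :
    (Pᴴ * Q).trace =
      inner ℂ (WithLp.toLp 2 P.vec : EuclideanSpace ℂ (Fin n × Fin n)) (WithLp.toLp 2 Q.vec) := by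
  rw [EuclideanSpace.inner_toLp_toLp, dotProduct_comm, star_vec_dotProduct_vec]

lemma frobeniusNorm_sq_eq_re_trace_conjTranspose_mul (M : Matrix (Fin n) (Fin n) ℂ) :
    frobeniusNorm M ^ 2 = (Mᴴ * M).trace.re := by
  rw [frobeniusNorm_eq_norm_vec, trace_conjTranspose_mul_eq_inner_vec,
    ← inner_self_eq_norm_sq (𝕜 := ℂ)]
  rfl

lemma frobeniusNorm_sq_eq_re_trace_mul_conjTranspose (M : Matrix (Fin n) (Fin n) ℂ) :
    frobeniusNorm M ^ 2 = (M * Mᴴ).trace.re := by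
  rw [frobeniusNorm_sq_eq_re_trace_conjTranspose_mul, trace_mul_comm]

lemma re_trace_conjTranspose_mul_le (P Q : Matrix (Fin n) (Fin n) ℂ) :
    (Pᴴ * Q).trace.re ≤ frobeniusNorm P * frobeniusNorm Q := by
  rw [trace_conjTranspose_mul_eq_inner_vec, frobeniusNorm_eq_norm_vec, frobeniusNorm_eq_norm_vec]
  exact re_inner_le_norm (𝕜 := ℂ) _ _

lemma frobeniusNorm_sq_eq_sum_col (M : Matrix (Fin n) (Fin n) ℂ) :
    frobeniusNorm M ^ 2 = ∑ k, ‖(WithLp.toLp 2 (Mᵀ k) : EuclideanSpace ℂ (Fin n))‖ ^ 2 := by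
  simp only [frobeniusNorm, EuclideanSpace.norm_sq_eq]
  rw [Real.sq_sqrt (by positivity), Finset.sum_comm]
  rfl

lemma frobeniusNorm_mul_le (C Y : Matrix (Fin n) (Fin n) ℂ) :
    frobeniusNorm (C * Y) ≤ l2OpNorm C * frobeniusNorm Y := by
  have hcol : ∀ k, ‖(WithLp.toLp 2 ((C * Y)ᵀ k) : EuclideanSpace ℂ (Fin n))‖ ≤
      l2OpNorm C * ‖(WithLp.toLp 2 (Yᵀ k) : EuclideanSpace ℂ (Fin n))‖ :=
    fun k => C.l2_opNorm_mulVec (WithLp.toLp 2 (Yᵀ k))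
  refine le_of_sq_le_sq ?_ (mul_nonneg (l2OpNorm_nonneg _) (frobeniusNorm_nonneg _))
  rw [mul_pow, frobeniusNorm_sq_eq_sum_col, frobeniusNorm_sq_eq_sum_col, Finset.mul_sum]
  gcongr with k
  rw [← mul_pow]
  exact pow_le_pow_left₀ (norm_nonneg _) (hcol k) 2

lemma re_trace_conjTranspose_mul_mul_le (C Y : Matrix (Fin n) (Fin n) ℂ) :
    (Yᴴ * C * Y).trace.re ≤ l2OpNorm C * frobeniusNorm Y ^ 2 :=
  calc (Yᴴ * C * Y).trace.re = (Yᴴ * (C * Y)).trace.re := by rw [mul_assoc]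
    _ ≤ frobeniusNorm Y * frobeniusNorm (C * Y) := re_trace_conjTranspose_mul_le _ _
    _ ≤ frobeniusNorm Y * (l2OpNorm C * frobeniusNorm Y) :=
      mul_le_mul_of_nonneg_left (frobeniusNorm_mul_le C Y) (frobeniusNorm_nonneg Y)
    _ = l2OpNorm C * frobeniusNorm Y ^ 2 := by ring

lemma sum_frobeniusNorm_mul_const_sq {m : ℕ} (A : Fin m → Matrix (Fin n) (Fin n) ℂ)
    (Y : Matrix (Fin n) (Fin n) ℂ) :
    ∑ j, frobeniusNorm (A j * Y) ^ 2 = (Yᴴ * (∑ j, (A j)ᴴ * A j) * Y).trace.re := by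
  simp only [frobeniusNorm_sq_eq_re_trace_conjTranspose_mul, conjTranspose_mul, Finset.mul_sum,
    Finset.sum_mul, trace_sum, Complex.re_sum, mul_assoc]

lemma sum_frobeniusNorm_const_mul_sq {m : ℕ} (X : Matrix (Fin n) (Fin n) ℂ)
    (B : Fin m → Matrix (Fin n) (Fin n) ℂ) :
    ∑ j, frobeniusNorm (X * B j) ^ 2 = (X * (∑ j, B j * (B j)ᴴ) * Xᴴ).trace.re := by
  simp only [frobeniusNorm_sq_eq_re_trace_mul_conjTranspose, conjTranspose_mul, Finset.mul_sum,
    Finset.sum_mul, trace_sum, Complex.re_sum, mul_assoc]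

theorem frobeniusNorm_sum_conjTranspose_mul_mul_le_of_mul_conjTranspose_eq {m : ℕ}
    (A B : Fin m → Matrix (Fin n) (Fin n) ℂ) (X R : Matrix (Fin n) (Fin n) ℂ)
    (hR : R * Rᴴ = ∑ j, B j * (B j)ᴴ) :
    frobeniusNorm (∑ j, (A j)ᴴ * X * B j) ≤
      Real.sqrt (l2OpNorm (∑ j, (A j)ᴴ * A j)) * frobeniusNorm (X * R) := by
  generalize hY : ∑ j, (A j)ᴴ * X * B j = Y
  set C := ∑ j, (A j)ᴴ * A j
  have hYY : Yᴴ * Y = ∑ j, (A j * Y)ᴴ * (X * B j) := by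
    nth_rw 2 [← hY]
    simp only [Finset.mul_sum, conjTranspose_mul, mul_assoc]
  have hAY : ∑ j, frobeniusNorm (A j * Y) ^ 2 ≤ l2OpNorm C * frobeniusNorm Y ^ 2 :=
    sum_frobeniusNorm_mul_const_sq A Y ▸ re_trace_conjTranspose_mul_mul_le C Y
  have hXB : ∑ j, frobeniusNorm (X * B j) ^ 2 = frobeniusNorm (X * R) ^ 2 := by
    rw [sum_frobeniusNorm_const_mul_sq, ← hR, frobeniusNorm_sq_eq_re_trace_mul_conjTranspose,
      conjTranspose_mul]
    simp only [mul_assoc]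
  have hY_sq : frobeniusNorm Y ^ 2 ≤
      Real.sqrt (l2OpNorm C) * frobeniusNorm Y * frobeniusNorm (X * R) :=
    calc frobeniusNorm Y ^ 2 = ∑ j, ((A j * Y)ᴴ * (X * B j)).trace.re := by
          rw [frobeniusNorm_sq_eq_re_trace_conjTranspose_mul, hYY, trace_sum, Complex.re_sum]
      _ ≤ ∑ j, frobeniusNorm (A j * Y) * frobeniusNorm (X * B j) :=
          Finset.sum_le_sum fun j _ => re_trace_conjTranspose_mul_le _ _
      _ ≤ Real.sqrt (∑ j, frobeniusNorm (A j * Y) ^ 2) *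
            Real.sqrt (∑ j, frobeniusNorm (X * B j) ^ 2) :=
          Real.sum_mul_le_sqrt_mul_sqrt _ _ _
      _ ≤ Real.sqrt (l2OpNorm C * frobeniusNorm Y ^ 2) * frobeniusNorm (X * R) := by
          rw [hXB, Real.sqrt_sq (frobeniusNorm_nonneg _)]
          exact mul_le_mul_of_nonneg_right (Real.sqrt_le_sqrt hAY) (frobeniusNorm_nonneg _)
      _ = Real.sqrt (l2OpNorm C) * frobeniusNorm Y * frobeniusNorm (X * R) := by
          rw [Real.sqrt_mul (l2OpNorm_nonneg _), Real.sqrt_sq (frobeniusNorm_nonneg _)]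
  rcases (frobeniusNorm_nonneg Y).eq_or_lt with hY0 | hY0
  · rw [← hY0]
    exact mul_nonneg (Real.sqrt_nonneg _) (frobeniusNorm_nonneg _)
  · exact le_of_mul_le_mul_right (by linear_combination hY_sq) hY0

end Frobenius

lemma Matrix.PosSemidef.cfc_sqrt_mul_conjTranspose_self {ι 𝕜 : Type*} [RCLike 𝕜] [Fintype ι]
    [DecidableEq ι] {S : Matrix ι ι 𝕜} (hS : S.PosSemidef) :
    cfc Real.sqrt S * (cfc Real.sqrt S)ᴴ = S := by
  rw [← star_eq_conjTranspose, (cfc_predicate Real.sqrt S).star_eq,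
    ← cfc_mul Real.sqrt Real.sqrt S]
  conv_rhs => rw [← cfc_id' ℝ S hS.1]
  refine cfc_congr fun x hx => Real.mul_self_sqrt ?_
  rw [hS.1.spectrum_real_eq_range_eigenvalues] at hx
  obtain ⟨i, rfl⟩ := hx
  exact hS.eigenvalues_nonneg i

/-- Cauchy–Schwarz inequality for elementary operators on matrices, Frobenius norm version:
`‖Σ Aⱼᴴ X Bⱼ‖_F ≤ ‖Σ Aⱼᴴ Aⱼ‖_op^{1/2} · ‖X · (Σ Bⱼ Bⱼᴴ)^{1/2}‖_F`. -/
theorem frobeniusNorm_sum_conjTranspose_mul_mul_le {n m : ℕ}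
    (A B : Fin m → Matrix (Fin n) (Fin n) ℂ) (X : Matrix (Fin n) (Fin n) ℂ) :
    frobeniusNorm (∑ j, (A j)ᴴ * X * B j) ≤
      Real.sqrt (l2OpNorm (∑ j, (A j)ᴴ * A j)) *
        frobeniusNorm (X * ((posSemidef_sum_mul_conjTranspose B).1.eigenvectorUnitary.1 *
          diagonal ((↑) ∘ ((posSemidef_sum_mul_conjTranspose B).1.eigenvalues · |>.sqrt)) *
          (star (posSemidef_sum_mul_conjTranspose B).1.eigenvectorUnitary :
            Matrix (Fin n) (Fin n) ℂ))) := by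
  have hS := posSemidef_sum_mul_conjTranspose B
  have hR : (hS.1.eigenvectorUnitary.1 * diagonal ((↑) ∘ (hS.1.eigenvalues · |>.sqrt)) *
      (star hS.1.eigenvectorUnitary : Matrix (Fin n) (Fin n) ℂ)) =
        cfc Real.sqrt (∑ j, B j * (B j)ᴴ) := by
    rw [hS.1.cfc_eq, IsHermitian.cfc, Unitary.conjStarAlgAut_apply]
    rfl
  rw [hR]
  exact frobeniusNorm_sum_conjTranspose_mul_mul_le_of_mul_conjTranspose_eq A B X _
    hS.cfc_sqrt_mul_conjTranspose_self
end

section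
/- Let H be a complex Hilbert space, n ∈ ℕ, and A₁,…,Aₙ, B₁,…,Bₙ ∈ B(H) such that each Aⱼ is normal, the Aⱼ mutually commute, each Bⱼ is normal, and the Bⱼ mutually commute. Then for every X ∈ B(H): ‖Σ_{j=1}^n Aⱼ* X Bⱼ‖ ≤ ‖(Σ_{j=1}^n Aⱼ* Aⱼ)^{1/2} · X · (Σ_{j=1}^n Bⱼ* Bⱼ)^{1/2}‖. -/
set_option synthInstance.maxHeartbeats 200000
open ContinuousLinearMap

/-!
For `ε > 0` put `S = (∑ Aⱼ* Aⱼ + ε)^{1/2}` and `T = (∑ Bⱼ* Bⱼ + ε)^{1/2}`. These are invertible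
and, by Fuglede's theorem, `S` commutes with every `Aⱼ` and `T` with every `Bⱼ`. Hence
`Uⱼ = S⁻¹ Aⱼ` and `Vⱼ = T⁻¹ Bⱼ` satisfy `∑ Uⱼ* Uⱼ ≤ 1` and `∑ Vⱼ* Vⱼ ≤ 1`, and
`∑ Aⱼ* X Bⱼ = ∑ Uⱼ* (S X T) Vⱼ`, whose norm is at most `‖S X T‖` by the Cauchy–Schwarz inequality
in `ℓ²`. Letting `ε → 0` gives the claim, since the square root is continuous on positive elements.
-/

open Filter Topology

theorem IsSelfAdjoint.units_inv {R : Type*} [Monoid R] [StarMul R] {u : Rˣ}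
    (hu : IsSelfAdjoint (u : R)) : IsSelfAdjoint (↑u⁻¹ : R) := by
  rw [IsSelfAdjoint, ← Units.coe_star_inv, show star u = u from Units.ext hu]

theorem sum_star_mul_inv_mul_le_one {R ι : Type*} [Ring R] [StarRing R] [PartialOrder R]
    [StarOrderedRing R] [Fintype ι] (a : ι → R) (u : Rˣ) (hu : IsSelfAdjoint (u : R))
    (hcomm : ∀ j, Commute (u : R) (a j)) (hle : ∑ j, star (a j) * a j ≤ u * u) :
    ∑ j, star (↑u⁻¹ * a j) * (↑u⁻¹ * a j) ≤ 1 := by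
  have hinv : IsSelfAdjoint (↑u⁻¹ : R) := hu.units_inv
  have hterm : ∀ j, star (↑u⁻¹ * a j) * (↑u⁻¹ * a j) = ↑u⁻¹ * (star (a j) * a j) * ↑u⁻¹ := by
    intro j
    have h1 : Commute (↑u⁻¹ : R) (a j) := (hcomm j).units_inv_left
    have h2 : Commute (↑u⁻¹ : R) (star (a j)) := by simpa [hinv.star_eq] using h1.star_star
    rw [star_mul, hinv.star_eq, ← h2.eq, h1.eq]
    simp only [mul_assoc]
  calc ∑ j, star (↑u⁻¹ * a j) * (↑u⁻¹ * a j)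
      = ↑u⁻¹ * (∑ j, star (a j) * a j) * ↑u⁻¹ := by
        simp only [hterm, Finset.mul_sum, Finset.sum_mul]
    _ ≤ ↑u⁻¹ * (u * u) * ↑u⁻¹ := hinv.conjugate_le_conjugate hle
    _ = 1 := by simp

theorem IsStarNormal.commute_sum_star_mul_self {A ι : Type*} [CStarAlgebra A] [Fintype ι]
    {a : ι → A} (ha : ∀ j, IsStarNormal (a j)) (hcomm : ∀ i j, Commute (a i) (a j)) (j : ι) :
    Commute (a j) (∑ i, star (a i) * a i) :=
  Commute.sum_right _ _ _ fun i _ ↦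
    ((ha i).commute_star_right (hcomm j i)).mul_right (hcomm j i)

section SqrtAddAlgebraMap

variable {A : Type*} [CStarAlgebra A] [PartialOrder A] [StarOrderedRing A] {p : A}

theorem isUnit_sqrt_add_algebraMap (hp : 0 ≤ p) {ε : ℝ} (hε : 0 < ε) :
    IsUnit (CFC.sqrt (p + algebraMap ℝ A ε)) :=
  (IsStrictlyPositive.nonneg_add hp (isStrictlyPositive_algebraMap hε)).isUnit_cfcSqrt

theorem le_sqrt_add_algebraMap_mul_self (hp : 0 ≤ p) {ε : ℝ} (hε : 0 ≤ ε) :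
    p ≤ CFC.sqrt (p + algebraMap ℝ A ε) * CFC.sqrt (p + algebraMap ℝ A ε) := by
  have hε' : 0 ≤ algebraMap ℝ A ε := algebraMap_nonneg A hε
  rw [CFC.sqrt_mul_sqrt_self _ (add_nonneg hp hε')]
  exact le_add_of_nonneg_right hε'

theorem Commute.sqrt_add_algebraMap {b : A} (h : Commute b p) (ε : ℝ) :
    Commute (CFC.sqrt (p + algebraMap ℝ A ε)) b := by
  rw [CFC.sqrt_eq_cfc]
  exact ((h.add_right (Algebra.commutes ε b).symm).symm).cfc_nnreal _

theorem tendsto_sqrt_add_algebraMap (hp : 0 ≤ p) :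
    Tendsto (fun ε : ℝ ↦ CFC.sqrt (p + algebraMap ℝ A ε)) (𝓝[>] 0) (𝓝 (CFC.sqrt p)) := by
  have hlim : Tendsto (fun ε : ℝ ↦ p + algebraMap ℝ A ε) (𝓝[>] 0) (𝓝[{a | 0 ≤ a}] p) := by
    refine tendsto_nhdsWithin_iff.mpr ⟨?_, ?_⟩
    · exact ((continuous_const.add (continuous_algebraMap ℝ A)).tendsto' 0 p (by simp)).mono_left
        nhdsWithin_le_nhds
    · filter_upwards [self_mem_nhdsWithin] with ε hε
      exact add_nonneg hp (algebraMap_nonneg A (le_of_lt hε))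
  exact ((CFC.continuousOn_sqrt p hp).tendsto).comp hlim

end SqrtAddAlgebraMap

section Hilbert

open RCLike InnerProductSpace

variable {𝕜 E ι : Type*} [RCLike 𝕜] [NormedAddCommGroup E] [InnerProductSpace 𝕜 E]
  [CompleteSpace E] [Fintype ι]

theorem sum_norm_apply_sq_le_of_sum_star_mul_self_le_one {u : ι → E →L[𝕜] E}
    (hu : ∑ j, star (u j) * u j ≤ 1) (x : E) : ∑ j, ‖u j x‖ ^ 2 ≤ ‖x‖ ^ 2 := by
  have h := ((le_def _ _).mp hu).re_inner_nonneg_left x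
  have hsum : ∑ j, ‖u j x‖ ^ 2 = re ⟪(∑ j, star (u j) * u j) x, x⟫_𝕜 := by
    simp [apply_norm_sq_eq_inner_adjoint_left, star_eq_adjoint, sum_apply, sum_inner]
  rw [hsum, ← inner_self_eq_norm_sq (𝕜 := 𝕜)]
  simpa [sub_apply, inner_sub_left] using h

theorem norm_sum_star_mul_mul_le {u v : ι → E →L[𝕜] E} (hu : ∑ j, star (u j) * u j ≤ 1)
    (hv : ∑ j, star (v j) * v j ≤ 1) (m : E →L[𝕜] E) :
    ‖∑ j, star (u j) * m * v j‖ ≤ ‖m‖ := by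
  refine opNorm_le_of_re_inner_le (norm_nonneg m) fun x y hx hy ↦ ?_
  have hexpand : ⟪(∑ j, star (u j) * m * v j) x, y⟫_𝕜 = ∑ j, ⟪m (v j x), u j y⟫_𝕜 := by
    simp [sum_apply, sum_inner, star_eq_adjoint, adjoint_inner_left]
  have hcs : ∑ j, ‖v j x‖ * ‖u j y‖ ≤ 1 := by
    calc ∑ j, ‖v j x‖ * ‖u j y‖
        ≤ √(∑ j, ‖v j x‖ ^ 2) * √(∑ j, ‖u j y‖ ^ 2) := Real.sum_mul_le_sqrt_mul_sqrt _ _ _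
      _ ≤ √(‖x‖ ^ 2) * √(‖y‖ ^ 2) := by
        gcongr
        · exact sum_norm_apply_sq_le_of_sum_star_mul_self_le_one hv x
        · exact sum_norm_apply_sq_le_of_sum_star_mul_self_le_one hu y
      _ = 1 := by simp [hx, hy]
  calc re ⟪(∑ j, star (u j) * m * v j) x, y⟫_𝕜
      ≤ ‖∑ j, ⟪m (v j x), u j y⟫_𝕜‖ := hexpand ▸ re_le_norm _
    _ ≤ ∑ j, ‖m‖ * (‖v j x‖ * ‖u j y‖) := by
      refine (norm_sum_le _ _).trans (Finset.sum_le_sum fun j _ ↦ ?_)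
      calc ‖⟪m (v j x), u j y⟫_𝕜‖ ≤ ‖m (v j x)‖ * ‖u j y‖ := norm_inner_le_norm _ _
        _ ≤ ‖m‖ * ‖v j x‖ * ‖u j y‖ := by gcongr; exact le_opNorm _ _
        _ = ‖m‖ * (‖v j x‖ * ‖u j y‖) := mul_assoc _ _ _
    _ ≤ ‖m‖ := by
      rw [← Finset.mul_sum]
      exact mul_le_of_le_one_right (norm_nonneg m) hcs

end Hilbert

theorem norm_sum_star_mul_mul_le_of_le_mul_self {E ι : Type*} [NormedAddCommGroup E]
    [InnerProductSpace ℂ E] [CompleteSpace E] [Fintype ι] {a b : ι → E →L[ℂ] E} {s t : E →L[ℂ] E}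
    (hs : IsUnit s) (hs_sa : IsSelfAdjoint s) (hsa : ∀ j, Commute s (a j))
    (ha : ∑ j, star (a j) * a j ≤ s * s)
    (ht : IsUnit t) (ht_sa : IsSelfAdjoint t) (htb : ∀ j, Commute t (b j))
    (hb : ∑ j, star (b j) * b j ≤ t * t) (X : E →L[ℂ] E) :
    ‖∑ j, star (a j) * X * b j‖ ≤ ‖s * X * t‖ := by
  obtain ⟨u, rfl⟩ := hs
  obtain ⟨w, rfl⟩ := ht
  have hfactor : ∑ j, star (a j) * X * b j
      = ∑ j, star (↑u⁻¹ * a j) * (↑u * X * ↑w) * (↑w⁻¹ * b j) := by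
    refine Finset.sum_congr rfl fun j _ ↦ ?_
    rw [star_mul, hs_sa.units_inv.star_eq]
    simp [mul_assoc]
  rw [hfactor]
  exact norm_sum_star_mul_mul_le (sum_star_mul_inv_mul_le_one a u hs_sa hsa ha)
    (sum_star_mul_inv_mul_le_one b w ht_sa htb hb) _

/-- For commuting families of normal operators, the Cauchy–Schwarz inequality for
elementary operators takes the symmetric form
`‖Σ Aⱼ* X Bⱼ‖ ≤ ‖(Σ Aⱼ* Aⱼ)^{1/2} X (Σ Bⱼ* Bⱼ)^{1/2}‖`. -/
theorem norm_sum_adjoint_mul_le_of_normal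
    {H : Type*} [NormedAddCommGroup H] [InnerProductSpace ℂ H] [CompleteSpace H]
    (n : ℕ) (A B : Fin n → H →L[ℂ] H)
    (hA : ∀ j, IsStarNormal (A j)) (hA' : ∀ i j, Commute (A i) (A j))
    (hB : ∀ j, IsStarNormal (B j)) (hB' : ∀ i j, Commute (B i) (B j))
    (X : H →L[ℂ] H) :
    ‖∑ j, adjoint (A j) * X * B j‖ ≤
      ‖CFC.sqrt (∑ j, adjoint (A j) * A j) * X * CFC.sqrt (∑ j, adjoint (B j) * B j)‖ := by
  simp only [← star_eq_adjoint]
  have hP : 0 ≤ ∑ j, star (A j) * A j := Finset.sum_nonneg fun j _ ↦ star_mul_self_nonneg (A j)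
  have hQ : 0 ≤ ∑ j, star (B j) * B j := Finset.sum_nonneg fun j _ ↦ star_mul_self_nonneg (B j)
  refine ge_of_tendsto
    (((tendsto_sqrt_add_algebraMap hP).mul_const X).mul (tendsto_sqrt_add_algebraMap hQ)).norm ?_
  filter_upwards [self_mem_nhdsWithin] with ε (hε : 0 < ε)
  exact norm_sum_star_mul_mul_le_of_le_mul_self
    (isUnit_sqrt_add_algebraMap hP hε) (CFC.sqrt_nonneg _).isSelfAdjoint
    (fun j ↦ (IsStarNormal.commute_sum_star_mul_self hA hA' j).sqrt_add_algebraMap ε)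
    (le_sqrt_add_algebraMap_mul_self hP hε.le)
    (isUnit_sqrt_add_algebraMap hQ hε) (CFC.sqrt_nonneg _).isSelfAdjoint
    (fun j ↦ (IsStarNormal.commute_sum_star_mul_self hB hB' j).sqrt_add_algebraMap ε)
    (le_sqrt_add_algebraMap_mul_self hQ hε.le) X
end

section
/- Let H be a complex Hilbert space, n ∈ ℕ, and A₁,…,Aₙ, B₁,…,Bₙ ∈ B(H) such that each Aⱼ is normal, the Aⱼ mutually commute, each Bⱼ is normal, the Bⱼ mutually commute, and Σ_{j=1}^n Aⱼ* Aⱼ ≤ 1, Σ_{j=1}^n Bⱼ* Bⱼ ≤ 1. Then for every X ∈ B(H): ‖(1 − Σ_{j=1}^n Aⱼ* Aⱼ)^{1/2} · X · (1 − Σ_{j=1}^n Bⱼ* Bⱼ)^{1/2}‖ ≤ ‖X − Σ_{j=1}^n Aⱼ* X Bⱼ‖. -/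
set_option synthInstance.maxHeartbeats 400000

open ContinuousLinearMap

/-!
Write `Φ Y = ∑ Aⱼ* Y Bⱼ`, `P = ∑ Aⱼ* Aⱼ`, `Q = ∑ Bⱼ* Bⱼ` and `D = X - Φ X`, so that
`X = ∑_{k<N} Φᵏ D + Φᴺ X`. By Fuglede's theorem every `Aⱼ*` commutes with `P` (and `Bⱼ*` with `Q`),
hence `∑ Aⱼ* Pᵏ Aⱼ = Pᵏ⁺¹`, and Cauchy–Schwarz applied `k` times gives
`|⟪Φᵏ Y x, y⟫| ≤ ‖Y‖ ⟪Qᵏ x, x⟫^{1/2} ⟪Pᵏ y, y⟫^{1/2}`. For `x = (1 - Q)^{1/2} x₀` the geometric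
series `∑_{k<N} Qᵏ (1 - Q) = 1 - Qᴺ` bounds `∑_k ⟪Qᵏ x, x⟫` by `‖x₀‖²`, and likewise for `P`; one
more Cauchy–Schwarz bounds the telescoped sum by `‖D‖ ‖x₀‖ ‖y₀‖`, while the remainder tends to zero.
-/

open Finset RCLike Filter Topology
open scoped InnerProductSpace

def elementaryOperator {R ι : Type*} [Fintype ι] [NonUnitalNonAssocRing R] [Star R]
    (a b : ι → R) : AddMonoid.End R where
  toFun Y := ∑ j, star (a j) * Y * b j
  map_zero' := by simp
  map_add' Y Z := by simp only [mul_add, add_mul, sum_add_distrib]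

lemma elementaryOperator_apply {R ι : Type*} [Fintype ι] [NonUnitalNonAssocRing R] [Star R]
    (a b : ι → R) (Y : R) : elementaryOperator a b Y = ∑ j, star (a j) * Y * b j := rfl

lemma AddMonoid.End.sum_range_pow_apply_sub_add_pow_apply {M : Type*} [AddCommGroup M]
    (f : AddMonoid.End M) (x : M) (N : ℕ) :
    ∑ k ∈ range N, (f ^ k) (x - f x) + (f ^ N) x = x := by
  induction N with
  | zero => simp
  | succ N ih =>
    rw [sum_range_succ, pow_succ, AddMonoid.End.coe_mul, Function.comp_apply, map_sub]
    conv_rhs => rw [← ih]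
    abel

section

variable {ι : Type*} [Fintype ι]

lemma commute_star_sum_star_mul_self {A : Type*} [NonUnitalCStarAlgebra A] {a : ι → A}
    (ha : ∀ i, IsStarNormal (a i)) (hc : ∀ i j, Commute (a i) (a j)) (j : ι) :
    Commute (star (a j)) (∑ i, star (a i) * a i) :=
  Commute.sum_right _ _ _ fun i _ =>
    (hc j i).star_star.mul_right ((ha j).commute_star_left (hc j i))

lemma sum_star_mul_pow_mul {R : Type*} [Semiring R] [Star R] {a : ι → R}
    (h : ∀ j, Commute (star (a j)) (∑ i, star (a i) * a i)) (k : ℕ) :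
    ∑ j, star (a j) * (∑ i, star (a i) * a i) ^ k * a j = (∑ i, star (a i) * a i) ^ (k + 1) := by
  simp_rw [((h _).pow_right k).eq, mul_assoc, ← mul_sum, pow_succ]

end

lemma sum_sqrt_one_sub_mul_pow_mul {A : Type*} [CStarAlgebra A] [PartialOrder A]
    [StarOrderedRing A] {t : A} (ht : t ≤ 1) (N : ℕ) :
    ∑ k ∈ range N, CFC.sqrt (1 - t) * t ^ k * CFC.sqrt (1 - t) = 1 - t ^ N := by
  set s := CFC.sqrt (1 - t)
  have hs : s * s = 1 - t := CFC.sqrt_mul_sqrt_self _ (sub_nonneg.2 ht)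
  have hst : Commute s t := by
    have h := (Commute.one_right s).sub_right ((Commute.refl s).mul_right (Commute.refl s))
    rwa [hs, sub_sub_cancel] at h
  simp_rw [((hst.pow_right _).eq), mul_assoc, hs, ← sum_mul, geom_sum_mul_neg]

section Hilbert

variable {H : Type*} [NormedAddCommGroup H] [InnerProductSpace ℂ H]

lemma re_inner_nonneg_of_nonneg {T : H →L[ℂ] H} (hT : 0 ≤ T) (x : H) :
    0 ≤ re ⟪T x, x⟫_ℂ :=
  ((nonneg_iff_isPositive T).1 hT).re_inner_nonneg_left x

variable [CompleteSpace H]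

lemma inner_star_mul_mul_apply (a b Y : H →L[ℂ] H) (x y : H) :
    ⟪(star a * Y * b) x, y⟫_ℂ = ⟪Y (b x), a y⟫_ℂ := by
  rw [mul_apply_eq_comp, mul_apply_eq_comp, star_eq_adjoint, adjoint_inner_left]

lemma sum_range_re_inner_pow_sqrt_one_sub_le {t : H →L[ℂ] H} (h0 : 0 ≤ t) (h1 : t ≤ 1)
    (z : H) (N : ℕ) :
    ∑ k ∈ range N, re ⟪(t ^ k) (CFC.sqrt (1 - t) z), CFC.sqrt (1 - t) z⟫_ℂ ≤ ‖z‖ ^ 2 := by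
  have hs : star (CFC.sqrt (1 - t)) = CFC.sqrt (1 - t) :=
    (IsSelfAdjoint.of_nonneg (CFC.sqrt_nonneg _)).star_eq
  calc ∑ k ∈ range N, re ⟪(t ^ k) (CFC.sqrt (1 - t) z), CFC.sqrt (1 - t) z⟫_ℂ
      = re ⟪(1 - t ^ N) z, z⟫_ℂ := by
        simp_rw [← sum_sqrt_one_sub_mul_pow_mul h1 N, _root_.sum_apply, sum_inner, map_sum,
          ← inner_star_mul_mul_apply, hs]
    _ = ‖z‖ ^ 2 - re ⟪(t ^ N) z, z⟫_ℂ := by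
        rw [sub_apply, one_apply_eq_self, inner_sub_left, map_sub, inner_self_eq_norm_sq]
    _ ≤ ‖z‖ ^ 2 := sub_le_self _ (re_inner_nonneg_of_nonneg (CStarAlgebra.pow_nonneg h0 N) z)

variable {ι : Type*} [Fintype ι]

lemma norm_inner_elementaryOperator_apply_le {a b : ι → H →L[ℂ] H} {Y S T : H →L[ℂ] H}
    {c : ℝ} (hc : 0 ≤ c) (hS : 0 ≤ S) (hT : 0 ≤ T)
    (hY : ∀ x y, ‖⟪Y x, y⟫_ℂ‖ ≤ c * (√(re ⟪T x, x⟫_ℂ) * √(re ⟪S y, y⟫_ℂ))) (x y : H) :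
    ‖⟪elementaryOperator a b Y x, y⟫_ℂ‖ ≤
      c * (√(re ⟪elementaryOperator b b T x, x⟫_ℂ) * √(re ⟪elementaryOperator a a S y, y⟫_ℂ)) := by
  simp only [elementaryOperator_apply, _root_.sum_apply, sum_inner, map_sum,
    inner_star_mul_mul_apply]
  calc ‖∑ j, ⟪Y (b j x), a j y⟫_ℂ‖
      ≤ ∑ j, c * (√(re ⟪T (b j x), b j x⟫_ℂ) * √(re ⟪S (a j y), a j y⟫_ℂ)) :=
        (norm_sum_le _ _).trans (sum_le_sum fun j _ => hY _ _)
    _ ≤ c * (√(∑ j, re ⟪T (b j x), b j x⟫_ℂ) * √(∑ j, re ⟪S (a j y), a j y⟫_ℂ)) := by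
        rw [← mul_sum]
        exact mul_le_mul_of_nonneg_left (Real.sum_sqrt_mul_sqrt_le _
          (fun j => re_inner_nonneg_of_nonneg hT _) (fun j => re_inner_nonneg_of_nonneg hS _)) hc

lemma norm_inner_elementaryOperator_pow_apply_le {a b : ι → H →L[ℂ] H}
    (ha : ∀ j, Commute (star (a j)) (∑ i, star (a i) * a i))
    (hb : ∀ j, Commute (star (b j)) (∑ i, star (b i) * b i)) (Y : H →L[ℂ] H) (k : ℕ)
    (x y : H) :
    ‖⟪(elementaryOperator a b ^ k) Y x, y⟫_ℂ‖ ≤ ‖Y‖ *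
      (√(re ⟪((∑ i, star (b i) * b i) ^ k) x, x⟫_ℂ) *
        √(re ⟪((∑ i, star (a i) * a i) ^ k) y, y⟫_ℂ)) := by
  induction k generalizing x y with
  | zero =>
    simp only [pow_zero, AddMonoid.End.coe_one, id, one_apply_eq_self, inner_self_eq_norm_sq,
      Real.sqrt_sq (norm_nonneg _)]
    calc ‖⟪Y x, y⟫_ℂ‖ ≤ ‖Y x‖ * ‖y‖ := norm_inner_le_norm _ _
      _ ≤ ‖Y‖ * ‖x‖ * ‖y‖ := by gcongr; exact Y.le_opNorm x
      _ = ‖Y‖ * (‖x‖ * ‖y‖) := mul_assoc _ _ _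
  | succ k ih =>
    have hP : ∀ c : ι → H →L[ℂ] H, 0 ≤ (∑ i, star (c i) * c i) ^ k := fun c =>
      CStarAlgebra.pow_nonneg (sum_nonneg fun i _ => star_mul_self_nonneg (c i)) k
    rw [pow_succ', AddMonoid.End.coe_mul, Function.comp_apply, ← sum_star_mul_pow_mul ha,
      ← sum_star_mul_pow_mul hb]
    exact norm_inner_elementaryOperator_apply_le (norm_nonneg Y) (hP a) (hP b) ih x y

lemma norm_inner_apply_sqrt_one_sub_le {a b : ι → H →L[ℂ] H}
    (ha : ∀ j, Commute (star (a j)) (∑ i, star (a i) * a i))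
    (hb : ∀ j, Commute (star (b j)) (∑ i, star (b i) * b i))
    (ha1 : ∑ i, star (a i) * a i ≤ 1) (hb1 : ∑ i, star (b i) * b i ≤ 1) (X : H →L[ℂ] H)
    (x y : H) :
    ‖⟪X (CFC.sqrt (1 - ∑ i, star (b i) * b i) x), CFC.sqrt (1 - ∑ i, star (a i) * a i) y⟫_ℂ‖ ≤
      ‖X - elementaryOperator a b X‖ * (‖x‖ * ‖y‖) := by
  set P := ∑ i, star (a i) * a i
  set Q := ∑ i, star (b i) * b i
  set x' := CFC.sqrt (1 - Q) x
  set y' := CFC.sqrt (1 - P) y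
  set Φ := elementaryOperator a b
  set u : ℕ → ℝ := fun k => re ⟪(Q ^ k) x', x'⟫_ℂ
  set v : ℕ → ℝ := fun k => re ⟪(P ^ k) y', y'⟫_ℂ
  have hP : 0 ≤ P := sum_nonneg fun i _ => star_mul_self_nonneg (a i)
  have hQ : 0 ≤ Q := sum_nonneg fun i _ => star_mul_self_nonneg (b i)
  have hu0 : ∀ k, 0 ≤ u k := fun k => re_inner_nonneg_of_nonneg (CStarAlgebra.pow_nonneg hQ k) _
  have hv0 : ∀ k, 0 ≤ v k := fun k => re_inner_nonneg_of_nonneg (CStarAlgebra.pow_nonneg hP k) _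
  have hu : ∀ N, ∑ k ∈ range N, u k ≤ ‖x‖ ^ 2 := sum_range_re_inner_pow_sqrt_one_sub_le hQ hb1 x
  have hv : ∀ N, ∑ k ∈ range N, v k ≤ ‖y‖ ^ 2 := sum_range_re_inner_pow_sqrt_one_sub_le hP ha1 y
  have hbound : ∀ N, ‖⟪X x', y'⟫_ℂ‖ ≤
      ‖X - Φ X‖ * (‖x‖ * ‖y‖) + ‖X‖ * (√(u N) * √(v N)) := fun N => by
    have hsum : ∑ k ∈ range N, √(u k) * √(v k) ≤ ‖x‖ * ‖y‖ :=
      (Real.sum_sqrt_mul_sqrt_le _ hu0 hv0).trans <| mul_le_mul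
        ((Real.sqrt_le_left (norm_nonneg x)).2 (hu N))
        ((Real.sqrt_le_left (norm_nonneg y)).2 (hv N)) (Real.sqrt_nonneg _) (norm_nonneg x)
    calc ‖⟪X x', y'⟫_ℂ‖
        = ‖∑ k ∈ range N, ⟪(Φ ^ k) (X - Φ X) x', y'⟫_ℂ + ⟪(Φ ^ N) X x', y'⟫_ℂ‖ := by
          rw [← sum_inner, ← _root_.sum_apply, ← inner_add_left, ← _root_.add_apply,
            AddMonoid.End.sum_range_pow_apply_sub_add_pow_apply]
      _ ≤ ∑ k ∈ range N, ‖X - Φ X‖ * (√(u k) * √(v k)) + ‖X‖ * (√(u N) * √(v N)) :=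
          (norm_add_le _ _).trans <| add_le_add ((norm_sum_le _ _).trans <| sum_le_sum fun k _ =>
            norm_inner_elementaryOperator_pow_apply_le ha hb _ k x' y')
            (norm_inner_elementaryOperator_pow_apply_le ha hb X N x' y')
      _ ≤ ‖X - Φ X‖ * (‖x‖ * ‖y‖) + ‖X‖ * (√(u N) * √(v N)) := by
          rw [← mul_sum]
          gcongr
  have hlim : Tendsto (fun N => √(u N) * √(v N)) atTop (𝓝 0) := by
    simpa using ((summable_of_sum_range_le hu0 hu).tendsto_atTop_zero.sqrt).mul
      ((summable_of_sum_range_le hv0 hv).tendsto_atTop_zero.sqrt)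
  exact ge_of_tendsto' (by simpa using tendsto_const_nhds.add (hlim.const_mul ‖X‖)) hbound

theorem norm_sqrt_one_sub_mul_mul_sqrt_one_sub_le {a b : ι → H →L[ℂ] H}
    (ha : ∀ j, Commute (star (a j)) (∑ i, star (a i) * a i))
    (hb : ∀ j, Commute (star (b j)) (∑ i, star (b i) * b i))
    (ha1 : ∑ i, star (a i) * a i ≤ 1) (hb1 : ∑ i, star (b i) * b i ≤ 1) (X : H →L[ℂ] H) :
    ‖CFC.sqrt (1 - ∑ i, star (a i) * a i) * X * CFC.sqrt (1 - ∑ i, star (b i) * b i)‖ ≤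
      ‖X - elementaryOperator a b X‖ := by
  set L := CFC.sqrt (1 - ∑ i, star (a i) * a i)
  have hL : star L = L := (IsSelfAdjoint.of_nonneg (CFC.sqrt_nonneg _)).star_eq
  refine opNorm_le_of_re_inner_le (norm_nonneg _) fun x y hx hy => ?_
  calc re ⟪(L * X * CFC.sqrt (1 - ∑ i, star (b i) * b i)) x, y⟫_ℂ
      ≤ ‖⟪X (CFC.sqrt (1 - ∑ i, star (b i) * b i) x), L y⟫_ℂ‖ := by
        rw [← hL, inner_star_mul_mul_apply, hL]
        exact re_le_norm _
    _ ≤ ‖X - elementaryOperator a b X‖ := by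
        simpa [hx, hy] using norm_inner_apply_sqrt_one_sub_le ha hb ha1 hb1 X x y

end Hilbert

/-- For commuting families of normal contractions (`Σ Aⱼ* Aⱼ ≤ 1`, `Σ Bⱼ* Bⱼ ≤ 1`),
`‖(1 − Σ Aⱼ* Aⱼ)^{1/2} X (1 − Σ Bⱼ* Bⱼ)^{1/2}‖ ≤ ‖X − Σ Aⱼ* X Bⱼ‖`. -/
theorem norm_sqrt_one_sub_mul_le
    {H : Type*} [NormedAddCommGroup H] [InnerProductSpace ℂ H] [CompleteSpace H]
    (n : ℕ) (A B : Fin n → H →L[ℂ] H)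
    (hA : ∀ j, IsStarNormal (A j)) (hA' : ∀ i j, Commute (A i) (A j))
    (hB : ∀ j, IsStarNormal (B j)) (hB' : ∀ i j, Commute (B i) (B j))
    (hA1 : ∑ j, adjoint (A j) * A j ≤ 1) (hB1 : ∑ j, adjoint (B j) * B j ≤ 1)
    (X : H →L[ℂ] H) :
    ‖CFC.sqrt (1 - ∑ j, adjoint (A j) * A j) * X *
        CFC.sqrt (1 - ∑ j, adjoint (B j) * B j)‖ ≤
      ‖X - ∑ j, adjoint (A j) * X * B j‖ := by
  simp only [← star_eq_adjoint] at hA1 hB1 ⊢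
  exact norm_sqrt_one_sub_mul_mul_sqrt_one_sub_le (commute_star_sum_star_mul_self hA hA')
    (commute_star_sum_star_mul_self hB hB') hA1 hB1 X
end

section
/- Let H be a complex Hilbert space and let A, B ∈ B(H) be normal operators with ‖A‖ < 1 and ‖B‖ < 1. Then for every X ∈ B(H) the series Σ_{k=0}^∞ A*ᵏ X Bᵏ converges absolutely in B(H) and ‖Σ_{k=0}^∞ A*ᵏ X Bᵏ‖ ≤ ‖(1 − A*A)^{−1/2} · X · (1 − B*B)^{−1/2}‖, where for a positive invertible operator P, P^{−1/2} denotes the inverse of its positive square root. -/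
open ContinuousLinearMap

/-!
Write `P = (1 - A*A)^{1/2}`, `Q = (1 - B*B)^{1/2}` and `Y = P⁻¹ X Q⁻¹`, so that `X = P Y Q` and
`⟪v, Σ_{k<n} A*ᵏ X Bᵏ u⟫ = Σ_{k<n} ⟪P Aᵏ v, Y Q Bᵏ u⟫`. Since `‖P w‖² = ‖w‖² - ‖A w‖²`, the sum
`Σ_k ‖P Aᵏ v‖²` telescopes and is at most `‖v‖²`, and likewise `Σ_k ‖Q Bᵏ u‖² ≤ ‖u‖²`; by
Cauchy–Schwarz every partial sum of the series therefore has norm at most `‖Y‖`.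
-/

open scoped InnerProductSpace

section NormedRing

variable {R : Type*} [NormedRing R]

theorem norm_pow_mul_mul_pow_le (a x b : R) (k : ℕ) :
    ‖a ^ k * x * b ^ k‖ ≤ ‖x‖ * (‖a‖ * ‖b‖) ^ k := by
  rcases k.eq_zero_or_pos with rfl | hk
  · simp
  calc ‖a ^ k * x * b ^ k‖ ≤ ‖a ^ k‖ * ‖x‖ * ‖b ^ k‖ := norm_mul₃_le
    _ ≤ ‖a‖ ^ k * ‖x‖ * ‖b‖ ^ k := by gcongr <;> exact norm_pow_le' _ hk
    _ = ‖x‖ * (‖a‖ * ‖b‖) ^ k := by ring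

theorem summable_norm_pow_mul_mul_pow {a b : R} (hab : ‖a‖ * ‖b‖ < 1) (x : R) :
    Summable fun k : ℕ => ‖a ^ k * x * b ^ k‖ :=
  .of_nonneg_of_le (fun _ => norm_nonneg _) (norm_pow_mul_mul_pow_le a x b)
    ((summable_geometric_of_lt_one (by positivity) hab).mul_left ‖x‖)

end NormedRing

section CStarAlgebra

variable {A : Type*} [CStarAlgebra A] [PartialOrder A] [StarOrderedRing A]

theorem CStarAlgebra.star_mul_self_le_one {a : A} (ha : ‖a‖ ≤ 1) : star a * a ≤ 1 := by
  rw [← CStarAlgebra.norm_le_one_iff_of_nonneg _ (star_mul_self_nonneg a),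
    CStarRing.norm_star_mul_self]
  exact mul_le_one₀ ha (norm_nonneg a) ha

theorem CStarAlgebra.isUnit_sqrt_one_sub_star_mul_self {a : A} (ha : ‖a‖ < 1) :
    IsUnit (CFC.sqrt (1 - star a * a)) := by
  rw [CFC.isUnit_sqrt_iff _ (sub_nonneg.mpr (star_mul_self_le_one ha.le))]
  refine isUnit_one_sub_of_norm_lt_one ?_
  rw [CStarRing.norm_star_mul_self]
  exact mul_lt_one_of_nonneg_of_lt_one_left (norm_nonneg a) ha ha.le

theorem CStarAlgebra.star_sqrt_mul_sqrt_add_star_mul_self {a : A} (ha : ‖a‖ ≤ 1) :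
    star (CFC.sqrt (1 - star a * a)) * CFC.sqrt (1 - star a * a) + star a * a = 1 := by
  rw [(CFC.sqrt_nonneg _).isSelfAdjoint.star_eq,
    CFC.sqrt_mul_sqrt_self _ (sub_nonneg.mpr (star_mul_self_le_one ha)), sub_add_cancel]

end CStarAlgebra

section Hilbert

variable {𝕜 E F G : Type*} [RCLike 𝕜] [NormedAddCommGroup E] [InnerProductSpace 𝕜 E]
  [NormedAddCommGroup F] [InnerProductSpace 𝕜 F] [NormedAddCommGroup G] [InnerProductSpace 𝕜 G]

theorem ContinuousLinearMap.opNorm_le_of_norm_inner_le (Z : E →L[𝕜] F) {C : ℝ} (hC : 0 ≤ C)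
    (h : ∀ v u, ‖⟪v, Z u⟫_𝕜‖ ≤ C * ‖v‖ * ‖u‖) : ‖Z‖ ≤ C := by
  refine Z.opNorm_le_bound hC fun u => ?_
  rcases (norm_nonneg (Z u)).eq_or_lt with h0 | h0
  · rw [← h0]; positivity
  have := h (Z u) u
  rw [inner_self_eq_norm_sq_to_K, norm_pow, RCLike.norm_ofReal, abs_norm] at this
  nlinarith

variable [CompleteSpace E] [CompleteSpace G]

theorem ContinuousLinearMap.norm_sq_add_norm_sq_of_adjoint_mul_add {S T : E →L[𝕜] E}
    (h : adjoint S * S + adjoint T * T = 1) (v : E) : ‖S v‖ ^ 2 + ‖T v‖ ^ 2 = ‖v‖ ^ 2 := by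
  have := congrArg (fun Z : E →L[𝕜] E => RCLike.re ⟪Z v, v⟫_𝕜) h
  simpa only [add_apply, mul_apply_eq_comp, one_apply_eq_self, inner_add_left, map_add,
    adjoint_inner_left, inner_self_eq_norm_sq] using this

theorem ContinuousLinearMap.sum_norm_mul_pow_apply_sq_le {S T : E →L[𝕜] E}
    (h : adjoint S * S + adjoint T * T = 1) (n : ℕ) (v : E) :
    ∑ k ∈ Finset.range n, ‖(S * T ^ k) v‖ ^ 2 ≤ ‖v‖ ^ 2 := by
  have hstep (k : ℕ) : ‖(S * T ^ k) v‖ ^ 2 = ‖(T ^ k) v‖ ^ 2 - ‖(T ^ (k + 1)) v‖ ^ 2 := by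
    rw [← norm_sq_add_norm_sq_of_adjoint_mul_add h ((T ^ k) v), pow_succ' T k,
      mul_apply_eq_comp, mul_apply_eq_comp]
    ring
  rw [Finset.sum_congr rfl fun k _ => hstep k, Finset.sum_range_sub', pow_zero,
    one_apply_eq_self]
  exact sub_le_self _ (sq_nonneg _)

theorem ContinuousLinearMap.norm_sum_adjoint_comp_comp_le {ι : Type*} (s : Finset ι)
    (S : ι → G →L[𝕜] E) (R : ι → G →L[𝕜] F) (Y : F →L[𝕜] E)
    (hS : ∀ v, ∑ k ∈ s, ‖S k v‖ ^ 2 ≤ ‖v‖ ^ 2) (hR : ∀ u, ∑ k ∈ s, ‖R k u‖ ^ 2 ≤ ‖u‖ ^ 2) :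
    ‖∑ k ∈ s, adjoint (S k) ∘L Y ∘L R k‖ ≤ ‖Y‖ := by
  refine opNorm_le_of_norm_inner_le _ (norm_nonneg Y) fun v u => ?_
  calc ‖⟪v, (∑ k ∈ s, adjoint (S k) ∘L Y ∘L R k) u⟫_𝕜‖
      = ‖∑ k ∈ s, ⟪S k v, Y (R k u)⟫_𝕜‖ := by
        simp only [sum_apply, comp_apply, inner_sum, adjoint_inner_right]
    _ ≤ ∑ k ∈ s, ‖Y‖ * (‖S k v‖ * ‖R k u‖) := by
        refine (norm_sum_le _ _).trans (Finset.sum_le_sum fun k _ => ?_)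
        calc ‖⟪S k v, Y (R k u)⟫_𝕜‖ ≤ ‖S k v‖ * (‖Y‖ * ‖R k u‖) :=
              (norm_inner_le_norm _ _).trans (by gcongr; exact Y.le_opNorm _)
          _ = ‖Y‖ * (‖S k v‖ * ‖R k u‖) := by ring
    _ ≤ ‖Y‖ * (√(∑ k ∈ s, ‖S k v‖ ^ 2) * √(∑ k ∈ s, ‖R k u‖ ^ 2)) := by
        rw [← Finset.mul_sum]
        gcongr
        exact Real.sum_mul_le_sqrt_mul_sqrt _ _ _
    _ ≤ ‖Y‖ * ‖v‖ * ‖u‖ := by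
        rw [mul_assoc]
        gcongr
        exacts [(Real.sqrt_le_sqrt (hS v)).trans_eq (Real.sqrt_sq (norm_nonneg v)),
          (Real.sqrt_le_sqrt (hR u)).trans_eq (Real.sqrt_sq (norm_nonneg u))]

end Hilbert

theorem norm_tsum_adjoint_pow_mul_pow_le_general
    {H : Type*} [NormedAddCommGroup H] [InnerProductSpace ℂ H] [CompleteSpace H]
    (A B : H →L[ℂ] H)
    (hAn : ‖A‖ < 1) (hBn : ‖B‖ < 1) (X : H →L[ℂ] H) :
    Summable (fun k : ℕ => ‖(adjoint A) ^ k * X * B ^ k‖) ∧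
      ‖∑' k : ℕ, (adjoint A) ^ k * X * B ^ k‖ ≤
        ‖Ring.inverse (CFC.sqrt (1 - adjoint A * A)) * X *
          Ring.inverse (CFC.sqrt (1 - adjoint B * B))‖ := by
  have hsum : Summable fun k : ℕ => ‖(adjoint A) ^ k * X * B ^ k‖ := by
    refine summable_norm_pow_mul_mul_pow ?_ X
    rw [← star_eq_adjoint, norm_star]
    exact mul_lt_one_of_nonneg_of_lt_one_left (norm_nonneg A) hAn hBn.le
  refine ⟨hsum, ?_⟩
  set P := CFC.sqrt (1 - adjoint A * A)
  set Q := CFC.sqrt (1 - adjoint B * B)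
  set Y := Ring.inverse P * X * Ring.inverse Q
  have hPu : IsUnit P := CStarAlgebra.isUnit_sqrt_one_sub_star_mul_self hAn
  have hQu : IsUnit Q := CStarAlgebra.isUnit_sqrt_one_sub_star_mul_self hBn
  have hPsa : IsSelfAdjoint P := (CFC.sqrt_nonneg _).isSelfAdjoint
  have hX : X = P * Y * Q := by
    simp only [Y, ← mul_assoc, Ring.mul_inverse_cancel _ hPu, one_mul]
    rw [mul_assoc, Ring.inverse_mul_cancel _ hQu, mul_one]
  have hterm (k : ℕ) :
      (adjoint A) ^ k * X * B ^ k = adjoint (P * A ^ k) ∘L Y ∘L (Q * B ^ k) := by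
    rw [← star_eq_adjoint (P * A ^ k), star_mul, star_pow, star_eq_adjoint, hPsa.star_eq, hX]
    simp only [mul_assoc]
    rfl
  refine le_of_tendsto' hsum.of_norm.hasSum.tendsto_sum_nat.norm fun n => ?_
  simp only [hterm]
  exact norm_sum_adjoint_comp_comp_le _ _ _ Y
    (sum_norm_mul_pow_apply_sq_le (CStarAlgebra.star_sqrt_mul_sqrt_add_star_mul_self hAn.le) n)
    (sum_norm_mul_pow_apply_sq_le (CStarAlgebra.star_sqrt_mul_sqrt_add_star_mul_self hBn.le) n)

/-- For normal strict contractions `A`, `B`, the series `Σ A*ᵏ X Bᵏ` converges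
absolutely and `‖Σ_{k} A*ᵏ X Bᵏ‖ ≤ ‖(1 − A*A)^{−1/2} X (1 − B*B)^{−1/2}‖`, where
`P^{−1/2}` denotes the inverse of the positive square root of `P`. -/
theorem norm_tsum_adjoint_pow_mul_pow_le
    {H : Type*} [NormedAddCommGroup H] [InnerProductSpace ℂ H] [CompleteSpace H]
    (A B : H →L[ℂ] H) (hA : IsStarNormal A) (hB : IsStarNormal B)
    (hAn : ‖A‖ < 1) (hBn : ‖B‖ < 1) (X : H →L[ℂ] H) :
    Summable (fun k : ℕ => ‖(adjoint A) ^ k * X * B ^ k‖) ∧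
      ‖∑' k : ℕ, (adjoint A) ^ k * X * B ^ k‖ ≤
        ‖Ring.inverse (CFC.sqrt (1 - adjoint A * A)) * X *
          Ring.inverse (CFC.sqrt (1 - adjoint B * B))‖ :=
  norm_tsum_adjoint_pow_mul_pow_le_general A B hAn hBn X
end

section
/- Let H be a complex Hilbert space, n ∈ ℕ, and A₁,…,Aₙ, B₁,…,Bₙ ∈ B(H). Define continuous linear maps on B(H): S(X) = Σ_{j=1}^n Aⱼ* X Bⱼ, S₁(X) = Σ_{j=1}^n Aⱼ* X Aⱼ, S₂(X) = Σ_{j=1}^n Bⱼ* X Bⱼ. Then r(S)² ≤ r(S₁) · r(S₂), where r denotes the spectral radius in the Banach algebra of continuous linear maps from B(H) to itself. -/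
open ContinuousLinearMap

section Aux

variable {H : Type*} [NormedAddCommGroup H] [InnerProductSpace ℂ H] [CompleteSpace H]

local notation "⟪" x ", " y "⟫" => @inner ℂ _ _ x y

lemma adjoint_mul' (a b : H →L[ℂ] H) : adjoint (a * b) = adjoint b * adjoint a :=
  adjoint_comp a b

lemma adjoint_one' : adjoint (1 : H →L[ℂ] H) = 1 := by
  rw [← ContinuousLinearMap.star_eq_adjoint]; exact star_one _

set_option maxHeartbeats 1000000 in
/-- Operator Cauchy–Schwarz: squared norm bound for `∑ Cᵢ* X Dᵢ`. -/
lemma op_cauchy_schwarz {ι : Type*} [Fintype ι] (C D : ι → H →L[ℂ] H) (X : H →L[ℂ] H) :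
    ‖∑ i, adjoint (C i) * X * D i‖ ^ 2 ≤
      ‖∑ i, adjoint (C i) * C i‖ * ‖∑ i, adjoint (D i) * D i‖ * ‖X‖ ^ 2 := by
  set T : H →L[ℂ] H := ∑ i, adjoint (C i) * X * D i with hT
  set a : ℝ := ‖∑ i, adjoint (C i) * C i‖ with ha
  set b : ℝ := ‖∑ i, adjoint (D i) * D i‖ with hb
  have ha0 : 0 ≤ a := norm_nonneg _
  have hb0 : 0 ≤ b := norm_nonneg _
  -- key inner product bound
  have key : ∀ ξ η : H, ‖⟪T ξ, η⟫‖ ^ 2 ≤ (b * ‖ξ‖ ^ 2) * ((a * ‖η‖ ^ 2) * ‖X‖ ^ 2) := by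
    intro ξ η
    have hsumD : ∑ i, ‖D i ξ‖ ^ 2 ≤ b * ‖ξ‖ ^ 2 := by
      have h1 : ∀ i, ‖D i ξ‖ ^ 2 = RCLike.re ⟪(adjoint (D i) * D i) ξ, ξ⟫ := by
        intro i
        have h : ((adjoint (D i) * D i) ξ) = adjoint (D i) (D i ξ) := rfl
        rw [h, adjoint_inner_left, ← @inner_self_eq_norm_sq ℂ]
      calc ∑ i, ‖D i ξ‖ ^ 2 = RCLike.re ⟪(∑ i, adjoint (D i) * D i) ξ, ξ⟫ := by
            rw [ContinuousLinearMap.sum_apply, sum_inner, map_sum]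
            exact Finset.sum_congr rfl fun i _ => h1 i
        _ ≤ ‖⟪(∑ i, adjoint (D i) * D i) ξ, ξ⟫‖ := RCLike.re_le_norm _
        _ ≤ ‖(∑ i, adjoint (D i) * D i) ξ‖ * ‖ξ‖ := norm_inner_le_norm _ _
        _ ≤ (b * ‖ξ‖) * ‖ξ‖ := by
            gcongr
            exact le_opNorm _ _
        _ = b * ‖ξ‖ ^ 2 := by ring
    have hsumC : ∑ i, ‖C i η‖ ^ 2 ≤ a * ‖η‖ ^ 2 := by
      have h1 : ∀ i, ‖C i η‖ ^ 2 = RCLike.re ⟪(adjoint (C i) * C i) η, η⟫ := by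
        intro i
        have h : ((adjoint (C i) * C i) η) = adjoint (C i) (C i η) := rfl
        rw [h, adjoint_inner_left, ← @inner_self_eq_norm_sq ℂ]
      calc ∑ i, ‖C i η‖ ^ 2 = RCLike.re ⟪(∑ i, adjoint (C i) * C i) η, η⟫ := by
            rw [ContinuousLinearMap.sum_apply, sum_inner, map_sum]
            exact Finset.sum_congr rfl fun i _ => h1 i
        _ ≤ ‖⟪(∑ i, adjoint (C i) * C i) η, η⟫‖ := RCLike.re_le_norm _
        _ ≤ ‖(∑ i, adjoint (C i) * C i) η‖ * ‖η‖ := norm_inner_le_norm _ _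
        _ ≤ (a * ‖η‖) * ‖η‖ := by
            gcongr
            exact le_opNorm _ _
        _ = a * ‖η‖ ^ 2 := by ring
    have step1 : ‖⟪T ξ, η⟫‖ ≤ ∑ i, ‖D i ξ‖ * (‖C i η‖ * ‖X‖) := by
      have hTe : ⟪T ξ, η⟫ = ∑ i, ⟪X (D i ξ), C i η⟫ := by
        rw [hT, ContinuousLinearMap.sum_apply, sum_inner]
        refine Finset.sum_congr rfl fun i _ => ?_
        have h : ((adjoint (C i) * X * D i) ξ) = adjoint (C i) (X (D i ξ)) := rfl
        rw [h, adjoint_inner_left]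
      rw [hTe]
      refine (norm_sum_le _ _).trans (Finset.sum_le_sum fun i _ => ?_)
      calc ‖⟪X (D i ξ), C i η⟫‖ ≤ ‖X (D i ξ)‖ * ‖C i η‖ := norm_inner_le_norm _ _
        _ ≤ (‖X‖ * ‖D i ξ‖) * ‖C i η‖ := by gcongr; exact le_opNorm _ _
        _ = ‖D i ξ‖ * (‖C i η‖ * ‖X‖) := by ring
    have step2 : (∑ i, ‖D i ξ‖ * (‖C i η‖ * ‖X‖)) ^ 2 ≤
        (∑ i, ‖D i ξ‖ ^ 2) * (∑ i, (‖C i η‖ * ‖X‖) ^ 2) :=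
      Finset.sum_mul_sq_le_sq_mul_sq _ _ _
    have step3 : (∑ i, (‖C i η‖ * ‖X‖) ^ 2) ≤ (a * ‖η‖ ^ 2) * ‖X‖ ^ 2 := by
      calc (∑ i, (‖C i η‖ * ‖X‖) ^ 2) = (∑ i, ‖C i η‖ ^ 2) * ‖X‖ ^ 2 := by
            rw [Finset.sum_mul]; exact Finset.sum_congr rfl fun i _ => by ring
        _ ≤ (a * ‖η‖ ^ 2) * ‖X‖ ^ 2 := by gcongr
    calc ‖⟪T ξ, η⟫‖ ^ 2 ≤ (∑ i, ‖D i ξ‖ * (‖C i η‖ * ‖X‖)) ^ 2 :=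
          pow_le_pow_left₀ (norm_nonneg _) step1 2
      _ ≤ (∑ i, ‖D i ξ‖ ^ 2) * (∑ i, (‖C i η‖ * ‖X‖) ^ 2) := step2
      _ ≤ (b * ‖ξ‖ ^ 2) * ((a * ‖η‖ ^ 2) * ‖X‖ ^ 2) :=
          mul_le_mul hsumD step3
            (Finset.sum_nonneg fun i _ => sq_nonneg _) (by positivity)
  -- from the inner bound, get a norm bound on T
  have hTnorm : ‖T‖ ≤ Real.sqrt (a * b) * ‖X‖ := by
    refine opNorm_le_bound _ (by positivity) fun ξ => ?_
    have h := key ξ (T ξ)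
    have hTT : ‖⟪T ξ, T ξ⟫‖ = ‖T ξ‖ ^ 2 := by
      rw [@inner_self_eq_norm_sq_to_K ℂ]
      simp [norm_pow]
    rw [hTT] at h
    have h4 : (‖T ξ‖ ^ 2) * (‖T ξ‖ ^ 2) ≤ (a * b * ‖X‖ ^ 2 * ‖ξ‖ ^ 2) * ‖T ξ‖ ^ 2 := by
      calc (‖T ξ‖ ^ 2) * (‖T ξ‖ ^ 2) = (‖T ξ‖ ^ 2) ^ 2 := by ring
        _ ≤ (b * ‖ξ‖ ^ 2) * ((a * ‖T ξ‖ ^ 2) * ‖X‖ ^ 2) := h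
        _ = (a * b * ‖X‖ ^ 2 * ‖ξ‖ ^ 2) * ‖T ξ‖ ^ 2 := by ring
    have h2 : ‖T ξ‖ ^ 2 ≤ a * b * ‖X‖ ^ 2 * ‖ξ‖ ^ 2 := by
      rcases eq_or_ne (‖T ξ‖) 0 with h0 | h0
      · have hpos : (0:ℝ) ≤ a * b * ‖X‖ ^ 2 * ‖ξ‖ ^ 2 := by positivity
        simpa [h0] using hpos
      · have hp : (0:ℝ) < ‖T ξ‖ ^ 2 :=
          pow_pos (lt_of_le_of_ne (norm_nonneg _) (Ne.symm h0)) 2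
        exact le_of_mul_le_mul_right h4 hp
    have h2' : ‖T ξ‖ ^ 2 ≤ (Real.sqrt (a * b) * ‖X‖ * ‖ξ‖) ^ 2 := by
      calc ‖T ξ‖ ^ 2 ≤ a * b * ‖X‖ ^ 2 * ‖ξ‖ ^ 2 := h2
        _ = (Real.sqrt (a * b) * ‖X‖ * ‖ξ‖) ^ 2 := by
            rw [mul_pow, mul_pow, Real.sq_sqrt (by positivity)]
    exact le_of_pow_le_pow_left₀ two_ne_zero (by positivity) h2'
  calc ‖T‖ ^ 2 ≤ (Real.sqrt (a * b) * ‖X‖) ^ 2 := pow_le_pow_left₀ (norm_nonneg _) hTnorm 2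
    _ = a * b * ‖X‖ ^ 2 := by rw [mul_pow, Real.sq_sqrt (by positivity)]

/-- Product of operators along a word. -/
noncomputable def wordProd {n : ℕ} (C : Fin n → H →L[ℂ] H) :
    ∀ k, (Fin k → Fin n) → (H →L[ℂ] H)
  | 0, _ => 1
  | (k+1), w => wordProd C k (Fin.tail w) * C (w 0)

lemma pow_apply_eq_sum_words {n : ℕ} (C D : Fin n → H →L[ℂ] H)
    (T : (H →L[ℂ] H) →L[ℂ] (H →L[ℂ] H))
    (hT : ∀ X, T X = ∑ j, adjoint (C j) * X * D j) (k : ℕ) (X : H →L[ℂ] H) :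
    (T ^ k) X = ∑ w : Fin k → Fin n, adjoint (wordProd C k w) * X * wordProd D k w := by
  induction k generalizing X with
  | zero =>
    simp [wordProd, adjoint_one']
  | succ k ih =>
    calc (T ^ (k+1)) X = T ((T ^ k) X) := by rw [pow_succ']; rfl
      _ = ∑ w : Fin k → Fin n, ∑ j,
            adjoint (C j) * (adjoint (wordProd C k w) * X * wordProd D k w) * D j := by
          rw [ih, map_sum]
          exact Finset.sum_congr rfl fun w _ => hT _
      _ = ∑ j, ∑ w : Fin k → Fin n,
            adjoint (C j) * (adjoint (wordProd C k w) * X * wordProd D k w) * D j :=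
          Finset.sum_comm
      _ = ∑ p : Fin n × (Fin k → Fin n),
            adjoint (wordProd C (k+1) (Fin.cons p.1 p.2)) * X
              * wordProd D (k+1) (Fin.cons p.1 p.2) := by
          rw [Fintype.sum_prod_type]
          refine Finset.sum_congr rfl fun j _ => Finset.sum_congr rfl fun w _ => ?_
          have hCw : wordProd C (k+1) (Fin.cons j w) = wordProd C k w * C j := by
            simp [wordProd, Fin.tail_cons]
          have hDw : wordProd D (k+1) (Fin.cons j w) = wordProd D k w * D j := by
            simp [wordProd, Fin.tail_cons]
          rw [hCw, hDw, adjoint_mul']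
          noncomm_ring
      _ = ∑ v : Fin (k+1) → Fin n, adjoint (wordProd C (k+1) v) * X * wordProd D (k+1) v :=
          Fintype.sum_equiv (Fin.consEquiv (fun _ : Fin (k+1) => Fin n)) _ _ (fun p => rfl)

end Aux

/-- For the elementary operators `S(X) = Σ Aⱼ* X Bⱼ`, `S₁(X) = Σ Aⱼ* X Aⱼ`,
`S₂(X) = Σ Bⱼ* X Bⱼ`, the spectral radii satisfy `r(S)² ≤ r(S₁) r(S₂)`. -/
theorem spectralRadius_elementary_operator_sq_le
    {H : Type*} [NormedAddCommGroup H] [InnerProductSpace ℂ H] [CompleteSpace H]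
    (n : ℕ) (A B : Fin n → H →L[ℂ] H)
    (S S₁ S₂ : (H →L[ℂ] H) →L[ℂ] (H →L[ℂ] H))
    (hS : ∀ X, S X = ∑ j, adjoint (A j) * X * B j)
    (hS₁ : ∀ X, S₁ X = ∑ j, adjoint (A j) * X * A j)
    (hS₂ : ∀ X, S₂ X = ∑ j, adjoint (B j) * X * B j) :
    spectralRadius ℂ S ^ 2 ≤ spectralRadius ℂ S₁ * spectralRadius ℂ S₂ := by
  rcases subsingleton_or_nontrivial H with hH | hH
  · haveI : Subsingleton ((H →L[ℂ] H) →L[ℂ] (H →L[ℂ] H)) := by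
      constructor
      intro f g
      ext X x
      exact Subsingleton.elim _ _
    have hS0 : S = 0 := Subsingleton.elim _ _
    rw [hS0, spectrum.spectralRadius_zero]
    simp
  -- nontrivial case
  have hnormone : ‖(1 : H →L[ℂ] H)‖ = 1 := norm_one
  -- the key norm inequality
  have hkey : ∀ k : ℕ, ‖S ^ k‖₊ ^ 2 ≤ ‖S₁ ^ k‖₊ * ‖S₂ ^ k‖₊ := by
    intro k
    have hR : ‖S ^ k‖ ^ 2 ≤ ‖S₁ ^ k‖ * ‖S₂ ^ k‖ := by
      have h1 : ‖(S₁ ^ k) 1‖ ≤ ‖S₁ ^ k‖ := by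
        calc ‖(S₁ ^ k) 1‖ ≤ ‖S₁ ^ k‖ * ‖(1 : H →L[ℂ] H)‖ := le_opNorm _ _
          _ = ‖S₁ ^ k‖ := by rw [hnormone, mul_one]
      have h2 : ‖(S₂ ^ k) 1‖ ≤ ‖S₂ ^ k‖ := by
        calc ‖(S₂ ^ k) 1‖ ≤ ‖S₂ ^ k‖ * ‖(1 : H →L[ℂ] H)‖ := le_opNorm _ _
          _ = ‖S₂ ^ k‖ := by rw [hnormone, mul_one]
      have hbound : ∀ X : H →L[ℂ] H, ‖(S ^ k) X‖ ^ 2 ≤ (‖S₁ ^ k‖ * ‖S₂ ^ k‖) * ‖X‖ ^ 2 := by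
        intro X
        have hexp1 : (S₁ ^ k) 1 = ∑ w : Fin k → Fin n,
            adjoint (wordProd A k w) * wordProd A k w := by
          rw [pow_apply_eq_sum_words A A S₁ hS₁ k 1]
          exact Finset.sum_congr rfl fun w _ => by rw [mul_one]
        have hexp2 : (S₂ ^ k) 1 = ∑ w : Fin k → Fin n,
            adjoint (wordProd B k w) * wordProd B k w := by
          rw [pow_apply_eq_sum_words B B S₂ hS₂ k 1]
          exact Finset.sum_congr rfl fun w _ => by rw [mul_one]
        calc ‖(S ^ k) X‖ ^ 2
            = ‖∑ w : Fin k → Fin n, adjoint (wordProd A k w) * X * wordProd B k w‖ ^ 2 := by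
              rw [pow_apply_eq_sum_words A B S hS k X]
          _ ≤ ‖∑ w : Fin k → Fin n, adjoint (wordProd A k w) * wordProd A k w‖ *
              ‖∑ w : Fin k → Fin n, adjoint (wordProd B k w) * wordProd B k w‖ * ‖X‖ ^ 2 :=
              op_cauchy_schwarz _ _ _
          _ = ‖(S₁ ^ k) 1‖ * ‖(S₂ ^ k) 1‖ * ‖X‖ ^ 2 := by rw [hexp1, hexp2]
          _ ≤ (‖S₁ ^ k‖ * ‖S₂ ^ k‖) * ‖X‖ ^ 2 := by gcongr
      have hSle : ‖S ^ k‖ ≤ Real.sqrt (‖S₁ ^ k‖ * ‖S₂ ^ k‖) := by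
        refine opNorm_le_bound _ (Real.sqrt_nonneg _) fun X => ?_
        have h' : ‖(S ^ k) X‖ ^ 2 ≤ (Real.sqrt (‖S₁ ^ k‖ * ‖S₂ ^ k‖) * ‖X‖) ^ 2 := by
          calc ‖(S ^ k) X‖ ^ 2 ≤ (‖S₁ ^ k‖ * ‖S₂ ^ k‖) * ‖X‖ ^ 2 := hbound X
            _ = (Real.sqrt (‖S₁ ^ k‖ * ‖S₂ ^ k‖) * ‖X‖) ^ 2 := by
                rw [mul_pow, Real.sq_sqrt (by positivity)]
        exact le_of_pow_le_pow_left₀ two_ne_zero (by positivity) h'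
      calc ‖S ^ k‖ ^ 2 ≤ Real.sqrt (‖S₁ ^ k‖ * ‖S₂ ^ k‖) ^ 2 :=
            pow_le_pow_left₀ (norm_nonneg _) hSle 2
        _ = ‖S₁ ^ k‖ * ‖S₂ ^ k‖ := Real.sq_sqrt (by positivity)
    rw [← NNReal.coe_le_coe]
    push_cast
    simpa [coe_nnnorm] using hR
  -- pass to the limit via Gelfand's formula
  have hf := spectrum.pow_nnnorm_pow_one_div_tendsto_nhds_spectralRadius S
  have hg := spectrum.pow_nnnorm_pow_one_div_tendsto_nhds_spectralRadius S₁
  have hh := spectrum.pow_nnnorm_pow_one_div_tendsto_nhds_spectralRadius S₂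
  have h1ne : spectralRadius ℂ S₁ ≠ ⊤ :=
    ((spectrum.spectralRadius_le_nnnorm (𝕜 := ℂ) S₁).trans_lt ENNReal.coe_lt_top).ne
  have h2ne : spectralRadius ℂ S₂ ≠ ⊤ :=
    ((spectrum.spectralRadius_le_nnnorm (𝕜 := ℂ) S₂).trans_lt ENNReal.coe_lt_top).ne
  refine le_of_tendsto_of_tendsto' (ENNReal.Tendsto.pow hf)
    (ENNReal.Tendsto.mul hg (Or.inr h2ne) hh (Or.inr h1ne)) fun k => ?_
  -- pointwise inequality
  have hpow : ∀ (x : ENNReal) (c : ℝ), (x ^ c) ^ (2:ℕ) = (x ^ (2:ℕ)) ^ c := by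
    intro x c
    rw [← ENNReal.rpow_natCast (x ^ c) 2, ← ENNReal.rpow_natCast x 2,
      ← ENNReal.rpow_mul, ← ENNReal.rpow_mul, mul_comm]
  calc ((‖S ^ k‖₊ : ENNReal) ^ (1 / (k:ℝ))) ^ 2
      = ((‖S ^ k‖₊ : ENNReal) ^ (2:ℕ)) ^ (1 / (k:ℝ)) := hpow _ _
    _ ≤ ((‖S₁ ^ k‖₊ : ENNReal) * (‖S₂ ^ k‖₊ : ENNReal)) ^ (1 / (k:ℝ)) := by
        refine ENNReal.rpow_le_rpow ?_ (by positivity)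
        rw [← ENNReal.coe_pow, ← ENNReal.coe_mul]
        exact_mod_cast hkey k
    _ = (‖S₁ ^ k‖₊ : ENNReal) ^ (1 / (k:ℝ)) * (‖S₂ ^ k‖₊ : ENNReal) ^ (1 / (k:ℝ)) :=
        ENNReal.mul_rpow_of_nonneg _ _ (by positivity)
end

section
/- Let H be a complex Hilbert space, n ∈ ℕ, and A₁,…,Aₙ ∈ B(H) such that each Aⱼ is normal and the Aⱼ mutually commute. Let T : B(H) → B(H) be the continuous linear map T(X) = Σ_{j=1}^n Aⱼ* X Aⱼ. Then the spectral radius of T equals ‖Σ_{j=1}^n Aⱼ* Aⱼ‖. -/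
open ContinuousLinearMap

open scoped InnerProductSpace

/-!
Put `S = Σ Aⱼ* Aⱼ`. By Fuglede's theorem each `Aⱼ` commutes with every `Aᵢ*`, hence with `S`, so
`Tᵏ 1 = Sᵏ` and `‖Sᵏ‖ ≤ ‖Tᵏ‖`; Gelfand's formula turns this into `‖S‖ = r(S) ≤ r(T)`, `S` being
self-adjoint. Conversely, Cauchy–Schwarz gives `‖T‖ ≤ ‖S‖`, whence `r(T) ≤ ‖T‖ ≤ ‖S‖`.
-/

theorem spectralRadius_le_of_forall_nnnorm_pow_le {A B : Type*}
    [NormedRing A] [NormedAlgebra ℂ A] [CompleteSpace A]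
    [NormedRing B] [NormedAlgebra ℂ B] [CompleteSpace B] {a : A} {b : B}
    (h : ∀ k : ℕ, ‖a ^ k‖₊ ≤ ‖b ^ k‖₊) : spectralRadius ℂ a ≤ spectralRadius ℂ b :=
  le_of_tendsto_of_tendsto' (spectrum.pow_nnnorm_pow_one_div_tendsto_nhds_spectralRadius a)
    (spectrum.pow_nnnorm_pow_one_div_tendsto_nhds_spectralRadius b) fun k =>
      ENNReal.rpow_le_rpow (ENNReal.coe_le_coe.2 (h k)) (by positivity)

theorem ContinuousLinearMap.spectralRadius_le_nnnorm {𝕜 E : Type*} [NontriviallyNormedField 𝕜]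
    [NormedAddCommGroup E] [NormedSpace 𝕜 E] [CompleteSpace E] (T : E →L[𝕜] E) :
    spectralRadius 𝕜 T ≤ ‖T‖₊ := by
  -- `spectrum.spectralRadius_le_nnnorm` needs `NormOneClass`, which fails when `E` is trivial.
  have h := spectrum.spectralRadius_le_pow_nnnorm_pow_one_div 𝕜 T 0
  simp only [zero_add, Nat.cast_zero, div_one, ENNReal.rpow_one] at h
  calc spectralRadius 𝕜 T ≤ ‖T‖₊ * ‖(1 : E →L[𝕜] E)‖₊ := h
    _ ≤ ‖T‖₊ * 1 := by gcongr; exact_mod_cast norm_id_le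
    _ = ‖T‖₊ := mul_one _

theorem iterate_apply_one_eq_pow_sum_mul {R ι : Type*} [Semiring R] [Fintype ι] {a b : ι → R}
    (f : R → R) (hf : ∀ x, f x = ∑ j, b j * x * a j) (ha : ∀ j, Commute (a j) (∑ i, b i * a i))
    (k : ℕ) : f^[k] 1 = (∑ j, b j * a j) ^ k := by
  induction k with
  | zero => simp
  | succ k ih =>
    rw [Function.iterate_succ_apply', ih, hf, pow_succ', Finset.sum_mul]
    refine Finset.sum_congr rfl fun j _ => ?_
    rw [mul_assoc, mul_assoc, ((ha j).pow_right k).eq]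

section SumAdjointMulMul

variable {𝕜 E ι : Type*} [RCLike 𝕜] [NormedAddCommGroup E] [InnerProductSpace 𝕜 E]
  [CompleteSpace E] [Fintype ι] (A : ι → E →L[𝕜] E)

theorem sum_norm_apply_sq_le (x : E) :
    ∑ j, ‖A j x‖ ^ 2 ≤ ‖∑ j, adjoint (A j) * A j‖ * ‖x‖ ^ 2 := by
  calc ∑ j, ‖A j x‖ ^ 2 = RCLike.re ⟪(∑ j, adjoint (A j) * A j) x, x⟫_𝕜 := by
        simp [apply_norm_sq_eq_inner_adjoint_left, sum_inner]
    _ ≤ ‖(∑ j, adjoint (A j) * A j) x‖ * ‖x‖ := re_inner_le_norm _ _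
    _ ≤ ‖∑ j, adjoint (A j) * A j‖ * ‖x‖ * ‖x‖ := by gcongr; exact le_opNorm _ _
    _ = ‖∑ j, adjoint (A j) * A j‖ * ‖x‖ ^ 2 := by ring

theorem norm_sum_adjoint_mul_mul_le (X : E →L[𝕜] E) :
    ‖∑ j, adjoint (A j) * X * A j‖ ≤ ‖∑ j, adjoint (A j) * A j‖ * ‖X‖ := by
  refine opNorm_le_of_re_inner_le (by positivity) fun x y hx hy => ?_
  have hsum (z : E) (hz : ‖z‖ = 1) : ∑ j, ‖A j z‖ ^ 2 ≤ ‖∑ j, adjoint (A j) * A j‖ := by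
    simpa [hz] using sum_norm_apply_sq_le A z
  calc RCLike.re ⟪(∑ j, adjoint (A j) * X * A j) x, y⟫_𝕜
      = ∑ j, RCLike.re ⟪X (A j x), A j y⟫_𝕜 := by
        simp [sum_inner, adjoint_inner_left]
    _ ≤ ∑ j, ‖X‖ * ((‖A j x‖ ^ 2 + ‖A j y‖ ^ 2) / 2) := by
        gcongr with j
        calc RCLike.re ⟪X (A j x), A j y⟫_𝕜 ≤ ‖X (A j x)‖ * ‖A j y‖ := re_inner_le_norm _ _
          _ ≤ ‖X‖ * ‖A j x‖ * ‖A j y‖ := by gcongr; exact le_opNorm _ _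
          _ ≤ ‖X‖ * ((‖A j x‖ ^ 2 + ‖A j y‖ ^ 2) / 2) := by
            rw [mul_assoc]; gcongr; nlinarith [sq_nonneg (‖A j x‖ - ‖A j y‖)]
    _ = ‖X‖ * ((∑ j, ‖A j x‖ ^ 2 + ∑ j, ‖A j y‖ ^ 2) / 2) := by
        rw [← Finset.mul_sum, ← Finset.sum_div, Finset.sum_add_distrib]
    _ ≤ ‖X‖ * ((‖∑ j, adjoint (A j) * A j‖ + ‖∑ j, adjoint (A j) * A j‖) / 2) := by
        gcongr; exacts [hsum x hx, hsum y hy]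
    _ = ‖∑ j, adjoint (A j) * A j‖ * ‖X‖ := by ring

end SumAdjointMulMul

/-- For a commuting family of normal operators `Aⱼ`, the spectral radius of the
elementary operator `X ↦ Σ Aⱼ* X Aⱼ` equals `‖Σ Aⱼ* Aⱼ‖`. -/
theorem spectralRadius_elementary_operator_eq
    {H : Type*} [NormedAddCommGroup H] [InnerProductSpace ℂ H] [CompleteSpace H]
    (n : ℕ) (A : Fin n → H →L[ℂ] H)
    (hA : ∀ j, IsStarNormal (A j)) (hA' : ∀ i j, Commute (A i) (A j))
    (T : (H →L[ℂ] H) →L[ℂ] (H →L[ℂ] H))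
    (hT : ∀ X, T X = ∑ j, adjoint (A j) * X * A j) :
    spectralRadius ℂ T = ‖∑ j, adjoint (A j) * A j‖₊ := by
  set S := ∑ j, adjoint (A j) * A j
  have hS : IsSelfAdjoint S := by
    simp [S, IsSelfAdjoint, star_sum, star_mul, star_eq_adjoint]
  have hAS (j : Fin n) : Commute (A j) S := Commute.sum_right _ _ _ fun i _ =>
    ((hA i).commute_star_left (hA' i j)).symm.mul_right (hA' j i)
  have hTk (k : ℕ) : (T ^ k) 1 = S ^ k := by
    rw [FunLike.coe_pow_eq_iterate]; exact iterate_apply_one_eq_pow_sum_mul T hT hAS k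
  have hTS_norm : ‖T‖ ≤ ‖S‖ := opNorm_le_bound T (norm_nonneg S) fun X => by
    rw [hT]; exact norm_sum_adjoint_mul_mul_le A X
  refine le_antisymm (T.spectralRadius_le_nnnorm.trans (by exact_mod_cast hTS_norm)) ?_
  rw [← hS.spectralRadius_eq_nnnorm]
  refine spectralRadius_le_of_forall_nnnorm_pow_le fun k => ?_
  calc ‖S ^ k‖₊ = ‖(T ^ k) 1‖₊ := by rw [hTk]
    _ ≤ ‖T ^ k‖₊ * ‖(1 : H →L[ℂ] H)‖₊ := le_opNNNorm _ _
    _ ≤ ‖T ^ k‖₊ := mul_le_of_le_one_right' norm_id_le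
end

section
/- Let H be a complex Hilbert space and let (Aⱼ)_{j∈ℕ}, (Bⱼ)_{j∈ℕ} be sequences in B(H) such that the families (Aⱼ* Aⱼ)_{j∈ℕ} and (Bⱼ* Bⱼ)_{j∈ℕ} are summable in the norm of B(H). Let X ∈ B(H) and assume the family (Aⱼ* X Bⱼ)_{j∈ℕ} is summable in B(H). Then ‖Σ_{j∈ℕ} Aⱼ* X Bⱼ‖ ≤ ‖Σ_{j∈ℕ} Aⱼ* Aⱼ‖^{1/2} · ‖Σ_{j∈ℕ} Bⱼ* Bⱼ‖^{1/2} · ‖X‖. -/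
open ContinuousLinearMap

open scoped InnerProductSpace

private lemma norm_le_of_inner_le {H : Type*} [NormedAddCommGroup H] [InnerProductSpace ℂ H]
    (z : H) (C : ℝ) (hC : 0 ≤ C) (h : ∀ y : H, ‖⟪z, y⟫_ℂ‖ ≤ C * ‖y‖) : ‖z‖ ≤ C := by
  rcases eq_or_lt_of_le (norm_nonneg z) with h0 | h0
  · rw [← h0]; exact hC
  · have h1 : ‖z‖ * ‖z‖ ≤ C * ‖z‖ := by
      calc ‖z‖ * ‖z‖ = Complex.re ⟪z, z⟫_ℂ := by
            rw [← pow_two]; exact (inner_self_eq_norm_sq (𝕜 := ℂ) z).symm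
        _ ≤ ‖⟪z, z⟫_ℂ‖ := Complex.re_le_norm _
        _ ≤ C * ‖z‖ := h z
    exact le_of_mul_le_mul_right h1 h0

private lemma sum_sq_apply_le {H : Type*} [NormedAddCommGroup H] [InnerProductSpace ℂ H]
    [CompleteSpace H] (B : ℕ → H →L[ℂ] H) (s : Finset ℕ) (x : H) :
    ∑ j ∈ s, ‖B j x‖ ^ 2 ≤ ‖∑ j ∈ s, adjoint (B j) * B j‖ * ‖x‖ ^ 2 := by
  have key : ∑ j ∈ s, ‖B j x‖ ^ 2
      = Complex.re ⟪(∑ j ∈ s, adjoint (B j) * B j) x, x⟫_ℂ := by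
    rw [ContinuousLinearMap.sum_apply, sum_inner, Complex.re_sum]
    refine Finset.sum_congr rfl fun j _ => ?_
    rw [ContinuousLinearMap.mul_apply, adjoint_inner_left]
    exact (inner_self_eq_norm_sq (𝕜 := ℂ) _).symm
  rw [key]
  calc Complex.re ⟪(∑ j ∈ s, adjoint (B j) * B j) x, x⟫_ℂ
      ≤ ‖⟪(∑ j ∈ s, adjoint (B j) * B j) x, x⟫_ℂ‖ := Complex.re_le_norm _
    _ ≤ ‖(∑ j ∈ s, adjoint (B j) * B j) x‖ * ‖x‖ := norm_inner_le_norm _ _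
    _ ≤ (‖∑ j ∈ s, adjoint (B j) * B j‖ * ‖x‖) * ‖x‖ :=
        mul_le_mul_of_nonneg_right ((∑ j ∈ s, adjoint (B j) * B j).le_opNorm x) (norm_nonneg x)
    _ = ‖∑ j ∈ s, adjoint (B j) * B j‖ * ‖x‖ ^ 2 := by ring

private lemma finset_version {H : Type*} [NormedAddCommGroup H] [InnerProductSpace ℂ H]
    [CompleteSpace H] (A B : ℕ → H →L[ℂ] H) (X : H →L[ℂ] H) (s : Finset ℕ) :
    ‖∑ j ∈ s, adjoint (A j) * X * B j‖ ≤
      Real.sqrt ‖∑ j ∈ s, adjoint (A j) * A j‖ * Real.sqrt ‖∑ j ∈ s, adjoint (B j) * B j‖ * ‖X‖ := by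
  set CA := Real.sqrt ‖∑ j ∈ s, adjoint (A j) * A j‖ with hCA
  set CB := Real.sqrt ‖∑ j ∈ s, adjoint (B j) * B j‖ with hCB
  have hCA0 : 0 ≤ CA := Real.sqrt_nonneg _
  have hCB0 : 0 ≤ CB := Real.sqrt_nonneg _
  refine opNorm_le_bound _ (by positivity) fun x => ?_
  refine norm_le_of_inner_le _ _ (by positivity) fun y => ?_
  have step1 : ‖⟪(∑ j ∈ s, adjoint (A j) * X * B j) x, y⟫_ℂ‖
      ≤ ∑ j ∈ s, ‖X‖ * (‖B j x‖ * ‖A j y‖) := by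
    rw [ContinuousLinearMap.sum_apply, sum_inner]
    refine (norm_sum_le _ _).trans (Finset.sum_le_sum fun j _ => ?_)
    have : ⟪(adjoint (A j) * X * B j) x, y⟫_ℂ = ⟪X (B j x), A j y⟫_ℂ := by
      simp only [ContinuousLinearMap.mul_apply, adjoint_inner_left]
    rw [this]
    calc ‖⟪X (B j x), A j y⟫_ℂ‖ ≤ ‖X (B j x)‖ * ‖A j y‖ := norm_inner_le_norm _ _
      _ ≤ (‖X‖ * ‖B j x‖) * ‖A j y‖ :=
          mul_le_mul_of_nonneg_right (X.le_opNorm _) (norm_nonneg _)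
      _ = ‖X‖ * (‖B j x‖ * ‖A j y‖) := by ring
  have step2 : ∑ j ∈ s, ‖B j x‖ * ‖A j y‖
      ≤ Real.sqrt (∑ j ∈ s, ‖B j x‖ ^ 2) * Real.sqrt (∑ j ∈ s, ‖A j y‖ ^ 2) :=
    Real.sum_mul_le_sqrt_mul_sqrt s _ _
  have hBx : Real.sqrt (∑ j ∈ s, ‖B j x‖ ^ 2) ≤ CB * ‖x‖ := by
    rw [hCB]
    calc Real.sqrt (∑ j ∈ s, ‖B j x‖ ^ 2)
        ≤ Real.sqrt (‖∑ j ∈ s, adjoint (B j) * B j‖ * ‖x‖ ^ 2) :=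
          Real.sqrt_le_sqrt (sum_sq_apply_le B s x)
      _ = Real.sqrt ‖∑ j ∈ s, adjoint (B j) * B j‖ * ‖x‖ := by
          rw [Real.sqrt_mul (norm_nonneg _), Real.sqrt_sq (norm_nonneg x)]
  have hAy : Real.sqrt (∑ j ∈ s, ‖A j y‖ ^ 2) ≤ CA * ‖y‖ := by
    rw [hCA]
    calc Real.sqrt (∑ j ∈ s, ‖A j y‖ ^ 2)
        ≤ Real.sqrt (‖∑ j ∈ s, adjoint (A j) * A j‖ * ‖y‖ ^ 2) :=
          Real.sqrt_le_sqrt (sum_sq_apply_le A s y)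
      _ = Real.sqrt ‖∑ j ∈ s, adjoint (A j) * A j‖ * ‖y‖ := by
          rw [Real.sqrt_mul (norm_nonneg _), Real.sqrt_sq (norm_nonneg y)]
  calc ‖⟪(∑ j ∈ s, adjoint (A j) * X * B j) x, y⟫_ℂ‖
      ≤ ∑ j ∈ s, ‖X‖ * (‖B j x‖ * ‖A j y‖) := step1
    _ = ‖X‖ * ∑ j ∈ s, ‖B j x‖ * ‖A j y‖ := by rw [Finset.mul_sum]
    _ ≤ ‖X‖ * (Real.sqrt (∑ j ∈ s, ‖B j x‖ ^ 2) * Real.sqrt (∑ j ∈ s, ‖A j y‖ ^ 2)) :=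
        mul_le_mul_of_nonneg_left step2 (norm_nonneg X)
    _ ≤ ‖X‖ * ((CB * ‖x‖) * (CA * ‖y‖)) := by
        apply mul_le_mul_of_nonneg_left _ (norm_nonneg X)
        exact mul_le_mul hBx hAy (Real.sqrt_nonneg _) (by positivity)
    _ = CA * CB * ‖X‖ * ‖x‖ * ‖y‖ := by ring

/-- Cauchy–Schwarz inequality for elementary operators with infinitely many terms:
if `(Aⱼ* Aⱼ)`, `(Bⱼ* Bⱼ)` and `(Aⱼ* X Bⱼ)` are summable in `B(H)`, then
`‖Σ Aⱼ* X Bⱼ‖ ≤ ‖Σ Aⱼ* Aⱼ‖^{1/2} ‖Σ Bⱼ* Bⱼ‖^{1/2} ‖X‖`. -/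
theorem norm_tsum_adjoint_mul_le
    {H : Type*} [NormedAddCommGroup H] [InnerProductSpace ℂ H] [CompleteSpace H]
    (A B : ℕ → H →L[ℂ] H) (X : H →L[ℂ] H)
    (hA : Summable fun j => adjoint (A j) * A j)
    (hB : Summable fun j => adjoint (B j) * B j)
    (hX : Summable fun j => adjoint (A j) * X * B j) :
    ‖∑' j, adjoint (A j) * X * B j‖ ≤
      Real.sqrt ‖∑' j, adjoint (A j) * A j‖ * Real.sqrt ‖∑' j, adjoint (B j) * B j‖ * ‖X‖ := by
  have hnormA : ∀ s : Finset ℕ, ‖∑ j ∈ s, adjoint (A j) * A j‖ ≤ ‖∑' j, adjoint (A j) * A j‖ := by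
    intro s
    refine CStarAlgebra.norm_le_norm_of_nonneg_of_le ?_ ?_
    · exact Finset.sum_nonneg fun j _ => by
        simpa [← ContinuousLinearMap.star_eq_adjoint] using star_mul_self_nonneg (A j)
    · exact Summable.sum_le_tsum s (fun j _ => by
        simpa [← ContinuousLinearMap.star_eq_adjoint] using star_mul_self_nonneg (A j)) hA
  have hnormB : ∀ s : Finset ℕ, ‖∑ j ∈ s, adjoint (B j) * B j‖ ≤ ‖∑' j, adjoint (B j) * B j‖ := by
    intro s
    refine CStarAlgebra.norm_le_norm_of_nonneg_of_le ?_ ?_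
    · exact Finset.sum_nonneg fun j _ => by
        simpa [← ContinuousLinearMap.star_eq_adjoint] using star_mul_self_nonneg (B j)
    · exact Summable.sum_le_tsum s (fun j _ => by
        simpa [← ContinuousLinearMap.star_eq_adjoint] using star_mul_self_nonneg (B j)) hB
  have hbound : ∀ s : Finset ℕ, ‖∑ j ∈ s, adjoint (A j) * X * B j‖ ≤
      Real.sqrt ‖∑' j, adjoint (A j) * A j‖ * Real.sqrt ‖∑' j, adjoint (B j) * B j‖ * ‖X‖ := by
    intro s
    refine (finset_version A B X s).trans ?_
    have := mul_le_mul (Real.sqrt_le_sqrt (hnormA s)) (Real.sqrt_le_sqrt (hnormB s))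
      (Real.sqrt_nonneg _) (Real.sqrt_nonneg _)
    exact mul_le_mul_of_nonneg_right this (norm_nonneg X)
  have htend : Filter.Tendsto (fun s : Finset ℕ => ‖∑ j ∈ s, adjoint (A j) * X * B j‖)
      Filter.atTop (nhds ‖∑' j, adjoint (A j) * X * B j‖) :=
    (continuous_norm.continuousAt).tendsto.comp hX.hasSum
  exact le_of_tendsto htend (Filter.Eventually.of_forall hbound)
end
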